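/- arXiv:2301.01530 — 7 statements merged into one kernel-verified Lean document; each statement's English description precedes it below -/
import Mathlib

section
/- Let 0 ≤ μ < L < ∞, let n ∈ ℕ, let I be a finite index set, and let {(x_i, g_i, f_i)}_{i ∈ I} ⊆ ℝ^n × ℝ^n × ℝ be a set of triplets. There exists a differentiable convex function f : ℝ^n → ℝ whose gradient ∇f is L-Lipschitz and which is μ-strongly convex, satisfying f(x_i) = f_i and ∇f(x_i) = g_i for all i ∈ I, if and only if for all i, j ∈ I one has f_i ≥ f_j + ⟨g_j, x_i − x_j⟩ + (1/(2(1 − μ/L))) · ( (1/L)‖g_i − g_j‖² + μ‖x_i − x_j‖² − 2(μ/L)⟨g_i − g_j, x_i − x_j⟩ ). -/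
open scoped InnerProductSpace
open Filter Topology

variable {E : Type*} [NormedAddCommGroup E] [InnerProductSpace ℝ E] [CompleteSpace E]

/-- Gradient from a two-sided quadratic squeeze. -/
lemma hasGradientAt_of_squeeze {F : E → ℝ} {v x : E} {C : ℝ}
    (h0 : ∀ y, 0 ≤ F y - F x - ⟪v, y - x⟫_ℝ)
    (h1 : ∀ y, F y - F x - ⟪v, y - x⟫_ℝ ≤ C * ‖y - x‖ ^ 2) :
    HasGradientAt F v x := by
  rw [hasGradientAt_iff_isLittleO, Asymptotics.isLittleO_iff]
  intro c hc
  have hC1 : (0:ℝ) < max C 1 := lt_of_lt_of_le one_pos (le_max_right _ _)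
  have htend : Tendsto (fun y : E => ‖y - x‖) (𝓝 x) (𝓝 0) := by
    have h : Continuous (fun y : E => ‖y - x‖) := (continuous_id.sub continuous_const).norm
    have := h.tendsto x
    simpa using this
  have hev : ∀ᶠ y in 𝓝 x, ‖y - x‖ < c / max C 1 := by
    apply htend.eventually_lt_const
    positivity
  filter_upwards [hev] with y hy
  have h0y := h0 y
  have h1y := h1 y
  have hn : ‖F y - F x - ⟪v, y - x⟫_ℝ‖ = F y - F x - ⟪v, y - x⟫_ℝ := by
    rw [Real.norm_eq_abs, abs_of_nonneg h0y]
  rw [hn]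
  have hyx : (0:ℝ) ≤ ‖y - x‖ := norm_nonneg _
  have hCle : C ≤ max C 1 := le_max_left _ _
  have hb : F y - F x - ⟪v, y - x⟫_ℝ ≤ (max C 1) * ‖y - x‖ ^ 2 := by nlinarith
  have h2 : (max C 1) * ‖y - x‖ ≤ c := by
    rcases eq_or_lt_of_le hyx with h | h
    · rw [← h]; simp; positivity
    · have := hy.le
      calc (max C 1) * ‖y - x‖ ≤ (max C 1) * (c / max C 1) := by nlinarith
        _ = c := by field_simp
  calc F y - F x - ⟪v, y - x⟫_ℝ ≤ (max C 1) * ‖y - x‖ ^ 2 := hb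
    _ = ((max C 1) * ‖y - x‖) * ‖y - x‖ := by ring
    _ ≤ c * ‖y - x‖ := by nlinarith

/-- Convexity from first-order lower bounds. -/
lemma convexOn_of_grad_lower {f : E → ℝ} {G : E → E}
    (h : ∀ a b : E, f b + ⟪G b, a - b⟫_ℝ ≤ f a) : ConvexOn ℝ Set.univ f := by
  refine ⟨convex_univ, fun a _ b _ s t hs ht hst => ?_⟩
  set z := s • a + t • b with hz
  have ha := h a z
  have hb := h b z
  have hkey : s • (a - z) + t • (b - z) = 0 := by
    have : s • (a - z) + t • (b - z) = s • a + t • b - (s + t) • z := by module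
    rw [this, hst, one_smul, hz]; abel
  have hinner : s * ⟪G z, a - z⟫_ℝ + t * ⟪G z, b - z⟫_ℝ = 0 := by
    have := congrArg (fun w => ⟪G z, w⟫_ℝ) hkey
    simpa [inner_add_right, real_inner_smul_right] using this
  have hfz : s * f z + t * f z = f z := by rw [← add_mul, hst, one_mul]
  simp only [smul_eq_mul]
  linarith [mul_le_mul_of_nonneg_left ha hs, mul_le_mul_of_nonneg_left hb ht, hinner, hfz]

/-- Gradient of `y ↦ c * ‖y‖²`. -/
lemma hasGradientAt_const_mul_normSq (c : ℝ) (hc : 0 ≤ c) (x : E) :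
    HasGradientAt (fun y : E => c * ‖y‖ ^ 2) ((2 * c) • x) x := by
  have key : ∀ y : E, (fun y : E => c * ‖y‖ ^ 2) y - c * ‖x‖ ^ 2 - ⟪(2 * c) • x, y - x⟫_ℝ
      = c * ‖y - x‖ ^ 2 := by
    intro y
    have h1 : ‖y - x‖ ^ 2 = ‖y‖ ^ 2 - 2 * ⟪y, x⟫_ℝ + ‖x‖ ^ 2 := norm_sub_sq_real y x
    have h2 : ⟪(2 * c) • x, y - x⟫_ℝ = 2 * c * (⟪x, y⟫_ℝ - ⟪x, x⟫_ℝ) := by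
      rw [real_inner_smul_left, inner_sub_right]
    have h3 : ⟪x, x⟫_ℝ = ‖x‖ ^ 2 := real_inner_self_eq_norm_sq x
    have h4 : ⟪x, y⟫_ℝ = ⟪y, x⟫_ℝ := real_inner_comm y x
    simp only [h2, h3, h4]
    nlinarith [h1]
  apply hasGradientAt_of_squeeze (C := c)
  · intro y; rw [key y]; positivity
  · intro y; rw [key y]

/-- Cocoercivity-type bound from first-order lower and quadratic upper bounds. -/
lemma cocoercive_of_bounds {h : E → ℝ} {G : E → E} {ν : ℝ} (hν : 0 < ν)
    (lower : ∀ a b : E, h a + ⟪G a, b - a⟫_ℝ ≤ h b)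
    (upper : ∀ a b : E, h b ≤ h a + ⟪G a, b - a⟫_ℝ + ν / 2 * ‖b - a‖ ^ 2) :
    ∀ a b : E, h a + ⟪G a, b - a⟫_ℝ + 1 / (2 * ν) * ‖G b - G a‖ ^ 2 ≤ h b := by
  intro a b
  set y := b - (1 / ν) • (G b - G a) with hy
  have h1 := lower a y
  have h2 := upper b y
  have e1 : y - b = -((1 / ν) • (G b - G a)) := by rw [hy]; abel
  have e2 : ⟪G b, y - b⟫_ℝ = -(1 / ν) * ⟪G b, G b - G a⟫_ℝ := by
    rw [e1, inner_neg_right, real_inner_smul_right]; ring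
  have e3 : ‖y - b‖ ^ 2 = (1 / ν) ^ 2 * ‖G b - G a‖ ^ 2 := by
    rw [e1, norm_neg, norm_smul]
    rw [Real.norm_eq_abs, abs_of_nonneg (by positivity : (0:ℝ) ≤ 1 / ν)]
    ring
  have e4 : ⟪G a, y - a⟫_ℝ = ⟪G a, b - a⟫_ℝ - (1 / ν) * ⟪G a, G b - G a⟫_ℝ := by
    have : y - a = (b - a) - (1 / ν) • (G b - G a) := by rw [hy]; abel
    rw [this, inner_sub_right, real_inner_smul_right]
  have e5 : ⟪G b, G b - G a⟫_ℝ - ⟪G a, G b - G a⟫_ℝ = ‖G b - G a‖ ^ 2 := by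
    rw [← inner_sub_left, real_inner_self_eq_norm_sq]
  rw [e2, e3] at h2
  rw [e4] at h1
  have hν' : ν ≠ 0 := ne_of_gt hν
  have hQ : ⟪G b, G b - G a⟫_ℝ = ⟪G a, G b - G a⟫_ℝ + ‖G b - G a‖ ^ 2 := by linarith [e5]
  rw [hQ] at h2
  have c1 : ν / 2 * ((1 / ν) ^ 2 * ‖G b - G a‖ ^ 2) = 1 / (2 * ν) * ‖G b - G a‖ ^ 2 := by
    field_simp
  have c2 : (1 / ν : ℝ) = 2 * (1 / (2 * ν)) := by field_simp
  rw [c1] at h2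
  rw [c2] at h1 h2
  ring_nf at h1 h2 ⊢
  linarith [h1, h2]

/-- Strong minimum property of minimizers of strongly convex functions. -/
lemma strong_min {χ : E → ℝ} {σ : ℝ} (hσ : 0 < σ)
    (hconv : ConvexOn ℝ Set.univ (fun s : E => χ s - σ / 2 * ‖s‖ ^ 2))
    {sstar : E} (hmin : ∀ s, χ sstar ≤ χ s) (s : E) :
    χ sstar + σ / 2 * ‖s - sstar‖ ^ 2 ≤ χ s := by
  have key : ∀ t : ℝ, 0 < t → t < 1 → χ sstar + σ / 2 * (1 - t) * ‖s - sstar‖ ^ 2 ≤ χ s := by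
    intro t ht0 ht1
    have hconv' := hconv.2 (Set.mem_univ sstar) (Set.mem_univ s)
      (by linarith : (0:ℝ) ≤ 1 - t) ht0.le (by ring)
    set z := (1 - t) • sstar + t • s with hzdef
    have hz : z = sstar + t • (s - sstar) := by rw [hzdef]; module
    have hmz := hmin z
    -- norm identity
    have hid : (1 - t) * ‖sstar‖ ^ 2 + t * ‖s‖ ^ 2 - ‖z‖ ^ 2 = t * (1 - t) * ‖s - sstar‖ ^ 2 := by
      have h1 : ‖z‖ ^ 2 = ‖sstar‖ ^ 2 + 2 * t * ⟪sstar, s - sstar⟫_ℝ + t ^ 2 * ‖s - sstar‖ ^ 2 := by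
        rw [hz]
        rw [← real_inner_self_eq_norm_sq, ← real_inner_self_eq_norm_sq, ← real_inner_self_eq_norm_sq]
        simp only [inner_add_left, inner_add_right, real_inner_smul_left, real_inner_smul_right]
        rw [real_inner_comm (s - sstar) sstar]
        ring
      have h2 : ‖s‖ ^ 2 = ‖sstar‖ ^ 2 + 2 * ⟪sstar, s - sstar⟫_ℝ + ‖s - sstar‖ ^ 2 := by
        have hs' : s = sstar + (s - sstar) := by abel
        nth_rewrite 1 [hs']
        rw [← real_inner_self_eq_norm_sq, ← real_inner_self_eq_norm_sq, ← real_inner_self_eq_norm_sq]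
        simp only [inner_add_left, inner_add_right]
        rw [real_inner_comm (s - sstar) sstar]
        ring
      rw [h1, h2]; ring
    simp only [smul_eq_mul] at hconv'
    nlinarith [hconv', hmz, hid]
  by_contra hcon
  push_neg at hcon
  set δ := χ sstar + σ / 2 * ‖s - sstar‖ ^ 2 - χ s with hδ
  have hδ0 : 0 < δ := by rw [hδ]; linarith
  set t := min (1/2 : ℝ) (δ / (σ * ‖s - sstar‖ ^ 2 + 1)) with ht
  have hpos : 0 < σ * ‖s - sstar‖ ^ 2 + 1 := by positivity
  have ht0 : 0 < t := lt_min (by norm_num) (by positivity)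
  have ht1 : t < 1 := lt_of_le_of_lt (min_le_left _ _) (by norm_num)
  have h1 := key t ht0 ht1
  have h2 : t ≤ δ / (σ * ‖s - sstar‖ ^ 2 + 1) := min_le_right _ _
  have h3 : σ / 2 * t * ‖s - sstar‖ ^ 2 < δ := by
    have h4 : σ / 2 * t * ‖s - sstar‖ ^ 2 ≤ σ / 2 * (δ / (σ * ‖s - sstar‖ ^ 2 + 1)) * ‖s - sstar‖ ^ 2 := by
      have hn : (0:ℝ) ≤ ‖s - sstar‖ ^ 2 := by positivity
      nlinarith
    have h5 : σ / 2 * (δ / (σ * ‖s - sstar‖ ^ 2 + 1)) * ‖s - sstar‖ ^ 2 < δ := by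
      have hlt : σ / 2 * ‖s - sstar‖ ^ 2 < σ * ‖s - sstar‖ ^ 2 + 1 := by nlinarith [norm_nonneg (s - sstar), sq_nonneg ‖s - sstar‖]
      calc σ / 2 * (δ / (σ * ‖s - sstar‖ ^ 2 + 1)) * ‖s - sstar‖ ^ 2
          = (σ / 2 * ‖s - sstar‖ ^ 2) * (δ / (σ * ‖s - sstar‖ ^ 2 + 1)) := by ring
        _ < (σ * ‖s - sstar‖ ^ 2 + 1) * (δ / (σ * ‖s - sstar‖ ^ 2 + 1)) := by
            apply mul_lt_mul_of_pos_right hlt; positivity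
        _ = δ := by field_simp
    linarith
  nlinarith [h1, h3]

/-- Descent lemma for a function with Lipschitz gradient. -/
lemma descent_lemma {f : E → ℝ} {L : ℝ} (hL : 0 ≤ L) (hf : Differentiable ℝ f)
    (hlip : ∀ a b : E, ‖gradient f a - gradient f b‖ ≤ L * ‖a - b‖) (x y : E) :
    f y ≤ f x + ⟪gradient f x, y - x⟫_ℝ + L / 2 * ‖y - x‖ ^ 2 := by
  set d := y - x with hd
  -- gradient is continuous
  have hgc : Continuous (gradient f) := by
    have : LipschitzWith (Real.toNNReal L) (gradient f) := by
      apply LipschitzWith.of_dist_le_mul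
      intro a b
      rw [dist_eq_norm, dist_eq_norm]
      calc ‖gradient f a - gradient f b‖ ≤ L * ‖a - b‖ := hlip a b
        _ ≤ (Real.toNNReal L) * ‖a - b‖ := by
            apply mul_le_mul_of_nonneg_right _ (norm_nonneg _)
            exact Real.le_coe_toNNReal L
    exact this.continuous
  have hFd : ∀ t : ℝ, HasDerivAt (fun t : ℝ => f (x + t • d))
      ⟪gradient f (x + t • d), d⟫_ℝ t := by
    intro t
    have hline : HasDerivAt (fun t : ℝ => x + t • d) d t := by
      simpa using ((hasDerivAt_id t).smul_const d).const_add x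
    have hgrad := (hf (x + t • d)).hasGradientAt
    have := hgrad.hasFDerivAt.comp_hasDerivAt t hline
    exact this
  have hφc : Continuous fun t : ℝ => ⟪gradient f (x + t • d), d⟫_ℝ := by
    apply Continuous.inner
    · exact hgc.comp (by continuity)
    · exact continuous_const
  have hint : ∀ t : ℝ, IntervalIntegrable (fun t : ℝ => ⟪gradient f (x + t • d), d⟫_ℝ)
      MeasureTheory.volume 0 t := fun t => hφc.intervalIntegrable 0 t
  have heq : f y - f x = ∫ t in (0:ℝ)..1, ⟪gradient f (x + t • d), d⟫_ℝ := by
    have := intervalIntegral.integral_eq_sub_of_hasDerivAt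
      (f := fun t : ℝ => f (x + t • d)) (a := 0) (b := 1)
      (fun t _ => hFd t) (hint 1)
    rw [this]
    congr 1 <;> simp [hd]
  have hbound : ∀ t ∈ Set.Icc (0:ℝ) 1,
      ⟪gradient f (x + t • d), d⟫_ℝ ≤ ⟪gradient f x, d⟫_ℝ + L * t * ‖d‖ ^ 2 := by
    intro t ht
    have h1 : ⟪gradient f (x + t • d), d⟫_ℝ - ⟪gradient f x, d⟫_ℝ
        = ⟪gradient f (x + t • d) - gradient f x, d⟫_ℝ := by rw [inner_sub_left]
    have h2 : ⟪gradient f (x + t • d) - gradient f x, d⟫_ℝ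
        ≤ ‖gradient f (x + t • d) - gradient f x‖ * ‖d‖ := real_inner_le_norm _ _
    have h3 : ‖gradient f (x + t • d) - gradient f x‖ ≤ L * (t * ‖d‖) := by
      have := hlip (x + t • d) x
      simpa [norm_smul, Real.norm_eq_abs, abs_of_nonneg ht.1] using this
    nlinarith [norm_nonneg d, mul_le_mul_of_nonneg_right h3 (norm_nonneg d)]
  have hmono : (∫ t in (0:ℝ)..1, ⟪gradient f (x + t • d), d⟫_ℝ)
      ≤ ∫ t in (0:ℝ)..1, (⟪gradient f x, d⟫_ℝ + L * t * ‖d‖ ^ 2) := by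
    apply intervalIntegral.integral_mono_on (by norm_num) (hint 1)
    · apply IntervalIntegrable.add intervalIntegrable_const
      apply ContinuousOn.intervalIntegrable
      apply Continuous.continuousOn
      continuity
    · exact hbound
  have hval : (∫ t in (0:ℝ)..1, (⟪gradient f x, d⟫_ℝ + L * t * ‖d‖ ^ 2))
      = ⟪gradient f x, d⟫_ℝ + L / 2 * ‖d‖ ^ 2 := by
    rw [intervalIntegral.integral_add intervalIntegrable_const]
    · simp only [intervalIntegral.integral_const]
      have : ∀ t : ℝ, L * t * ‖d‖ ^ 2 = (L * ‖d‖ ^ 2) * t := by intro t; ring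
      simp only [this]
      rw [intervalIntegral.integral_const_mul, integral_id]
      simp; ring
    · apply ContinuousOn.intervalIntegrable
      apply Continuous.continuousOn
      continuity
  linarith [heq, hmono, hval.le, hval.ge]


set_option maxHeartbeats 1000000 in
/-- Construction of a smooth convex interpolating function (0, ν) case. -/
theorem smooth_convex_construct
    {E : Type*} [NormedAddCommGroup E] [InnerProductSpace ℝ E] [CompleteSpace E] [ProperSpace E]
    {I : Type} [Fintype I] [Nonempty I] {ν : ℝ} (hν : 0 < ν)
    (y h : I → E) (e : I → ℝ)
    (interp : ∀ i j, e j + ⟪h j, y i - y j⟫_ℝ + 1 / (2 * ν) * ‖h i - h j‖ ^ 2 ≤ e i) :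
    ∃ (F : E → ℝ) (S : E → E),
      (∀ z, HasGradientAt F (S z) z) ∧
      (∀ a b, F b + ⟪S b, a - b⟫_ℝ ≤ F a) ∧
      (∀ a b, ‖S a - S b‖ ≤ ν * ‖a - b‖) ∧
      (∀ i, F (y i) = e i) ∧ (∀ i, S (y i) = h i) := by
  classical
  have hν' : ν ≠ 0 := ne_of_gt hν
  set w : I → E := fun i => y i - (1 / ν) • h i with hw
  set cc : I → ℝ := fun i => 1 / (2 * ν) * ‖h i‖ ^ 2 - e i with hcc
  clear_value w cc
  set A : E → ℝ := fun s => Finset.univ.sup' Finset.univ_nonempty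
    (fun i => ⟪w i, s⟫_ℝ + cc i) with hA
  clear_value A
  set ψ : E → ℝ := fun s => 1 / (2 * ν) * ‖s‖ ^ 2 + A s with hψ
  clear_value ψ
  have hA_le : ∀ (i : I) (s : E), ⟪w i, s⟫_ℝ + cc i ≤ A s := by
    intro i s
    rw [hA]
    exact Finset.le_sup' (fun i => ⟪w i, s⟫_ℝ + cc i) (Finset.mem_univ i)
  have hA_ex : ∀ s : E, ∃ i : I, A s = ⟪w i, s⟫_ℝ + cc i := by
    intro s
    obtain ⟨i, _, hi⟩ := Finset.exists_mem_eq_sup' Finset.univ_nonempty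
      (fun i => ⟪w i, s⟫_ℝ + cc i)
    rw [hA]
    exact ⟨i, hi⟩
  -- the quadratic pieces
  set pf : I → E → ℝ := fun i s =>
    (⟪h i, y i⟫_ℝ - e i) + ⟪y i, s - h i⟫_ℝ + 1 / (2 * ν) * ‖s - h i‖ ^ 2 with hpfdef
  clear_value pf
  have hpf : ∀ (i : I) (s : E), pf i s = 1 / (2 * ν) * ‖s‖ ^ 2 + (⟪w i, s⟫_ℝ + cc i) := by
    intro i s
    simp only [hpfdef, hw, hcc]
    rw [norm_sub_sq_real, inner_sub_left, real_inner_smul_left, inner_sub_right,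
      real_inner_comm (h i) s, real_inner_comm (y i) (h i)]
    field_simp
    ring
  have hψ_ge : ∀ (i : I) (s : E), pf i s ≤ ψ s := by
    intro i s
    rw [hpf, hψ]
    exact add_le_add le_rfl (hA_le i s)
  have hψhj : ∀ j : I, ψ (h j) = ⟪h j, y j⟫_ℝ - e j := by
    intro j
    apply le_antisymm
    · have hAle : A (h j) ≤ ⟪h j, y j⟫_ℝ - e j - 1 / (2 * ν) * ‖h j‖ ^ 2 := by
        rw [hA]
        apply Finset.sup'_le
        intro i _
        have hkey : pf i (h j) - (⟪h j, y j⟫_ℝ - e j)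
            = (e j + ⟪h j, y i - y j⟫_ℝ + 1 / (2 * ν) * ‖h i - h j‖ ^ 2) - e i := by
          simp only [hpfdef]
          rw [norm_sub_rev (h j) (h i)]
          simp only [inner_sub_right]
          linear_combination (real_inner_comm (y i) (h i)) + (real_inner_comm (h j) (y i))
        have h2 := interp i j
        have h3 : pf i (h j) ≤ ⟪h j, y j⟫_ℝ - e j := by linarith
        rw [hpf] at h3
        linarith
      rw [hψ]
      linarith
    · have h1 := hψ_ge j (h j)
      have h2 : pf j (h j) = ⟪h j, y j⟫_ℝ - e j := by
        simp only [hpfdef, sub_self, inner_zero_right, norm_zero]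
        ring
      linarith
  -- continuity
  have hcont : Continuous ψ := by
    rw [hψ]
    apply Continuous.add
    · exact continuous_const.mul (continuous_norm.pow 2)
    · rw [hA]
      apply Continuous.finset_sup'_apply Finset.univ_nonempty
      intro i _
      exact (continuous_const.inner continuous_id).add continuous_const
  -- existence of minimizers
  have hexists : ∀ x : E, ∃ s0 : E, ∀ s : E, ψ s0 - ⟪x, s0⟫_ℝ ≤ ψ s - ⟪x, s⟫_ℝ := by
    intro x
    have hχc : Continuous fun s : E => ψ s - ⟪x, s⟫_ℝ :=
      hcont.sub (continuous_const.inner continuous_id)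
    set i0 : I := Classical.arbitrary I with hi0
    set K := ‖w i0 - x‖ with hK
    have hK0 : 0 ≤ K := norm_nonneg _
    have hlb : ∀ s : E, 1 / (2 * ν) * ‖s‖ ^ 2 - K * ‖s‖ + cc i0 ≤ ψ s - ⟪x, s⟫_ℝ := by
      intro s
      have h1 := hA_le i0 s
      have h2 : ⟪x - w i0, s⟫_ℝ ≤ K * ‖s‖ := by
        have := real_inner_le_norm (x - w i0) s
        rw [norm_sub_rev x (w i0), ← hK] at this
        exact this
      have h3 : ⟪x - w i0, s⟫_ℝ = ⟪x, s⟫_ℝ - ⟪w i0, s⟫_ℝ := inner_sub_left x (w i0) s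
      rw [hψ]
      simp only
      linarith
    apply hχc.exists_forall_le' 0
    set M := ψ (0:E) - ⟪x, (0:E)⟫_ℝ with hM
    rw [Filter.eventually_iff, Filter.mem_cocompact]
    refine ⟨Metric.closedBall 0 (max 1 (2 * ν * (K + |M| + |cc i0| + 1))),
      isCompact_closedBall 0 _, ?_⟩
    intro s hs
    simp only [Set.mem_compl_iff, Metric.mem_closedBall, dist_zero_right, not_le] at hs
    simp only [Set.mem_setOf_eq]
    have hr1 : 1 ≤ ‖s‖ := le_trans (le_max_left _ _) hs.le
    have hr2 : 2 * ν * (K + |M| + |cc i0| + 1) ≤ ‖s‖ := le_trans (le_max_right _ _) hs.le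
    have hq : (K + |M| + |cc i0| + 1) * ‖s‖ ≤ 1 / (2 * ν) * ‖s‖ ^ 2 := by
      rw [div_mul_eq_mul_div, le_div_iff₀ (by positivity : (0:ℝ) < 2 * ν)]
      nlinarith [mul_le_mul_of_nonneg_right hr2 (norm_nonneg s)]
    have hprod : 0 ≤ (|M| + |cc i0|) * (‖s‖ - 1) := by
      apply mul_nonneg (by positivity) (by linarith)
    have habs1 : M ≤ |M| := le_abs_self M
    have habs2 : -|cc i0| ≤ cc i0 := neg_abs_le _
    have hchain : M ≤ 1 / (2 * ν) * ‖s‖ ^ 2 - K * ‖s‖ + cc i0 := by nlinarith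
    exact le_trans hchain (hlb s)
  set S : E → E := fun x => Classical.choose (hexists x) with hSdef
  have hS : ∀ (x : E) (s : E), ψ (S x) - ⟪x, S x⟫_ℝ ≤ ψ s - ⟪x, s⟫_ℝ := by
    intro x s
    exact Classical.choose_spec (hexists x) s
  clear_value S
  -- strong convexity of the objective
  have hconvχ : ∀ x : E, ConvexOn ℝ Set.univ
      (fun s : E => (ψ s - ⟪x, s⟫_ℝ) - (1 / ν) / 2 * ‖s‖ ^ 2) := by
    intro x
    have hfun : (fun s : E => (ψ s - ⟪x, s⟫_ℝ) - (1 / ν) / 2 * ‖s‖ ^ 2)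
        = fun s : E => A s - ⟪x, s⟫_ℝ := by
      funext s
      rw [hψ]
      simp only
      have hhalf : (1 / ν : ℝ) / 2 = 1 / (2 * ν) := by
        rw [div_div, mul_comm]
      rw [hhalf]; ring
    rw [hfun]
    refine ⟨convex_univ, fun p _ q _ a b ha hb hab => ?_⟩
    obtain ⟨i, hi⟩ := hA_ex (a • p + b • q)
    have hlin : ⟪w i, a • p + b • q⟫_ℝ = a * ⟪w i, p⟫_ℝ + b * ⟪w i, q⟫_ℝ := by
      rw [inner_add_right, real_inner_smul_right, real_inner_smul_right]
    have hlin2 : ⟪x, a • p + b • q⟫_ℝ = a * ⟪x, p⟫_ℝ + b * ⟪x, q⟫_ℝ := by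
      rw [inner_add_right, real_inner_smul_right, real_inner_smul_right]
    have h1 := hA_le i p
    have h2 := hA_le i q
    have hccc : a * cc i + b * cc i = cc i := by rw [← add_mul, hab, one_mul]
    simp only [smul_eq_mul]
    rw [hi, hlin, hlin2]
    nlinarith [mul_le_mul_of_nonneg_left h1 ha, mul_le_mul_of_nonneg_left h2 hb, hccc]
  have hstrong : ∀ (x : E) (s : E),
      (ψ (S x) - ⟪x, S x⟫_ℝ) + (1 / ν) / 2 * ‖s - S x‖ ^ 2 ≤ ψ s - ⟪x, s⟫_ℝ := by
    intro x s
    exact strong_min (by positivity) (hconvχ x) (hS x) s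
  -- Lipschitz property of S
  have hSlip : ∀ a b : E, ‖S a - S b‖ ≤ ν * ‖a - b‖ := by
    intro a b
    have k1 := hstrong a (S b)
    have k2 := hstrong b (S a)
    have hrev : ‖S b - S a‖ ^ 2 = ‖S a - S b‖ ^ 2 := by rw [norm_sub_rev]
    rw [hrev] at k1
    have e1 : ⟪a - b, S a - S b⟫_ℝ
        = ⟪a, S a⟫_ℝ - ⟪a, S b⟫_ℝ - ⟪b, S a⟫_ℝ + ⟪b, S b⟫_ℝ := by
      rw [inner_sub_left, inner_sub_right, inner_sub_right]; ring
    have hsum : (1 / ν) * ‖S a - S b‖ ^ 2 ≤ ⟪a - b, S a - S b⟫_ℝ := by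
      rw [e1]; linarith
    have hcs : ⟪a - b, S a - S b⟫_ℝ ≤ ‖a - b‖ * ‖S a - S b‖ := real_inner_le_norm _ _
    rcases eq_or_lt_of_le (norm_nonneg (S a - S b)) with hz | hz
    · rw [← hz]; positivity
    · have h1 : (1 / ν) * ‖S a - S b‖ ^ 2 ≤ ‖a - b‖ * ‖S a - S b‖ := le_trans hsum hcs
      have h2 : ‖S a - S b‖ * ‖S a - S b‖ ≤ (ν * ‖a - b‖) * ‖S a - S b‖ := by
        have h3 := mul_le_mul_of_nonneg_left h1 hν.le
        have h4 : ν * ((1 / ν) * ‖S a - S b‖ ^ 2) = ‖S a - S b‖ * ‖S a - S b‖ := by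
          rw [← mul_assoc, mul_one_div, div_self hν', one_mul, sq]
        nlinarith [h3, h4]
      exact le_of_mul_le_mul_right h2 hz
  -- S at the data points
  have hminyi : ∀ (i : I) (s : E), ψ (h i) - ⟪y i, h i⟫_ℝ ≤ ψ s - ⟪y i, s⟫_ℝ := by
    intro i s
    have h1 := hψ_ge i s
    have h2 : pf i s - ⟪y i, s⟫_ℝ - (ψ (h i) - ⟪y i, h i⟫_ℝ)
        = 1 / (2 * ν) * ‖s - h i‖ ^ 2 := by
      rw [hψhj i]
      simp only [hpfdef, inner_sub_right, real_inner_comm (y i) (h i)]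
      ring
    have h3 : (0:ℝ) ≤ 1 / (2 * ν) * ‖s - h i‖ ^ 2 := by positivity
    linarith
  have hSyi : ∀ i : I, S (y i) = h i := by
    intro i
    have h1 := hstrong (y i) (h i)
    have h2 := hminyi i (S (y i))
    have hpos : (0:ℝ) < (1 / ν) / 2 := by positivity
    have h5 : (1 / ν) / 2 * ‖h i - S (y i)‖ ^ 2 ≤ 0 := by linarith
    have h3 : ‖h i - S (y i)‖ ^ 2 ≤ 0 := by nlinarith [sq_nonneg ‖h i - S (y i)‖]
    have h6 : ‖h i - S (y i)‖ ^ 2 = 0 := le_antisymm h3 (by positivity)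
    have h4 : ‖h i - S (y i)‖ = 0 := by
      exact pow_eq_zero_iff (two_ne_zero) |>.mp h6
    have := norm_eq_zero.mp h4
    rw [sub_eq_zero] at this
    exact this.symm
  -- definition of F
  set F : E → ℝ := fun x => ⟪x, S x⟫_ℝ - ψ (S x) with hF
  clear_value F
  have hFlow : ∀ a b : E, F b + ⟪S b, a - b⟫_ℝ ≤ F a := by
    intro a b
    have h1 := hS a (S b)
    have h2 : ⟪S b, a - b⟫_ℝ = ⟪a, S b⟫_ℝ - ⟪b, S b⟫_ℝ := by
      rw [real_inner_comm (a - b) (S b), inner_sub_left]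
    rw [hF]
    simp only
    linarith
  have hFup : ∀ a b : E, F a - F b - ⟪S b, a - b⟫_ℝ ≤ ν * ‖a - b‖ ^ 2 := by
    intro a b
    have h1 := hS b (S a)
    have h2 : F a - F b ≤ ⟪a - b, S a⟫_ℝ := by
      rw [hF]
      simp only
      rw [inner_sub_left]
      linarith
    have h3 : ⟪S b, a - b⟫_ℝ = ⟪a - b, S b⟫_ℝ := real_inner_comm (a - b) (S b)
    have h4 : ⟪a - b, S a⟫_ℝ - ⟪a - b, S b⟫_ℝ = ⟪a - b, S a - S b⟫_ℝ := by
      rw [inner_sub_right]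
    have h5 : ⟪a - b, S a - S b⟫_ℝ ≤ ‖a - b‖ * ‖S a - S b‖ := real_inner_le_norm _ _
    have h6 := hSlip a b
    have h7 : F a - F b - ⟪S b, a - b⟫_ℝ ≤ ⟪a - b, S a - S b⟫_ℝ := by
      rw [h3, ← h4]; linarith
    have h8 : ‖a - b‖ * (ν * ‖a - b‖) = ν * ‖a - b‖ ^ 2 := by ring
    linarith [h7, h5, mul_le_mul_of_nonneg_left h6 (norm_nonneg (a - b)), h8]
  have hgrad : ∀ z : E, HasGradientAt F (S z) z := by
    intro z
    apply hasGradientAt_of_squeeze (C := ν)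
    · intro u
      have := hFlow u z
      linarith
    · intro u
      have := hFup u z
      linarith
  have hFyi : ∀ i : I, F (y i) = e i := by
    intro i
    rw [hF]
    simp only
    rw [hSyi i, hψhj i]
    linear_combination real_inner_comm (h i) (y i)
  exact ⟨F, S, hgrad, hFlow, hSlip, hFyi, hSyi⟩

set_option maxHeartbeats 1000000 in
/-- Smooth strongly convex interpolation, general inner product space version. -/
theorem smooth_strongly_convex_interpolation_general
    {E : Type*} [NormedAddCommGroup E] [InnerProductSpace ℝ E] [CompleteSpace E] [ProperSpace E]
    (μ L : ℝ) (hμ : 0 ≤ μ) (hμL : μ < L)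
    (I : Type) [Fintype I]
    (x g : I → E) (fv : I → ℝ) :
    (∃ f : E → ℝ,
      Differentiable ℝ f ∧
      ConvexOn ℝ Set.univ f ∧
      (∀ a b, ‖gradient f a - gradient f b‖ ≤ L * ‖a - b‖) ∧
      (∀ a b, f a ≥ f b + ⟪gradient f b, a - b⟫_ℝ + μ / 2 * ‖a - b‖ ^ 2) ∧
      (∀ i, f (x i) = fv i) ∧ (∀ i, gradient f (x i) = g i)) ↔
    (∀ i j, fv i ≥ fv j + ⟪g j, x i - x j⟫_ℝ +
      1 / (2 * (1 - μ / L)) *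
        (1 / L * ‖g i - g j‖ ^ 2 + μ * ‖x i - x j‖ ^ 2
          - 2 * (μ / L) * ⟪g i - g j, x i - x j⟫_ℝ)) := by
  have hL : (0:ℝ) < L := lt_of_le_of_lt hμ hμL
  have hν : (0:ℝ) < L - μ := by linarith
  have hLne : L ≠ 0 := ne_of_gt hL
  have hνne : L - μ ≠ 0 := ne_of_gt hν
  -- general algebraic facts
  have hxx : ∀ a b : E, ‖a‖ ^ 2 - ‖b‖ ^ 2 = 2 * ⟪b, a - b⟫_ℝ + ‖a - b‖ ^ 2 := by
    intro a b
    have h1 : a = b + (a - b) := by abel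
    nth_rewrite 1 [h1]
    rw [norm_add_sq_real]
    ring
  have hnorm : ∀ u v : E, ‖u - μ • v‖ ^ 2
      = ‖u‖ ^ 2 - 2 * μ * ⟪u, v⟫_ℝ + μ ^ 2 * ‖v‖ ^ 2 := by
    intro u v
    rw [norm_sub_sq_real, real_inner_smul_right, norm_smul, Real.norm_eq_abs,
      abs_of_nonneg hμ]
    ring
  have hQ : ∀ a2 a3 a4 : ℝ,
      1 / (2 * (1 - μ / L)) * (1 / L * a2 + μ * a3 - 2 * (μ / L) * a4)
        = 1 / (2 * (L - μ)) * (a2 - 2 * μ * a4 + μ ^ 2 * a3) + μ / 2 * a3 := by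
    intro a2 a3 a4
    have hden : (1:ℝ) - μ / L = (L - μ) / L := by field_simp
    rw [hden]
    field_simp
    ring
  constructor
  · -- necessity
    rintro ⟨f, hdiff, hconv, hlip, hsc, hval, hgrad⟩ i j
    set φ : E → ℝ := fun z => f z - μ / 2 * ‖z‖ ^ 2 with hφ
    set G : E → E := fun z => gradient f z - μ • z with hG
    clear_value φ G
    have hC1 : ∀ a b : E, φ a + ⟪G a, b - a⟫_ℝ ≤ φ b := by
      intro a b
      have h1 := hsc b a
      simp only [hφ, hG]
      have h2 : ⟪gradient f a - μ • a, b - a⟫_ℝ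
          = ⟪gradient f a, b - a⟫_ℝ - μ * ⟪a, b - a⟫_ℝ := by
        rw [inner_sub_left, real_inner_smul_left]
      have h3 : μ / 2 * (‖b‖ ^ 2 - ‖a‖ ^ 2)
          = μ / 2 * (2 * ⟪a, b - a⟫_ℝ + ‖b - a‖ ^ 2) := by rw [hxx b a]
      rw [h2]
      nlinarith [h1, h3]
    have hC2 : ∀ a b : E, φ b ≤ φ a + ⟪G a, b - a⟫_ℝ + (L - μ) / 2 * ‖b - a‖ ^ 2 := by
      intro a b
      have h1 := descent_lemma hL.le hdiff hlip a b
      simp only [hφ, hG]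
      have h2 : ⟪gradient f a - μ • a, b - a⟫_ℝ
          = ⟪gradient f a, b - a⟫_ℝ - μ * ⟪a, b - a⟫_ℝ := by
        rw [inner_sub_left, real_inner_smul_left]
      have h3 : μ / 2 * (‖b‖ ^ 2 - ‖a‖ ^ 2)
          = μ / 2 * (2 * ⟪a, b - a⟫_ℝ + ‖b - a‖ ^ 2) := by rw [hxx b a]
      rw [h2]
      nlinarith [h1, h3]
    have key := cocoercive_of_bounds hν hC1 hC2 (x j) (x i)
    simp only [hφ, hG, hval, hgrad] at key
    have hgg : (g i - μ • x i) - (g j - μ • x j) = (g i - g j) - μ • (x i - x j) := by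
      module
    rw [hgg, hnorm (g i - g j) (x i - x j)] at key
    have hinner : ⟪g j - μ • x j, x i - x j⟫_ℝ
        = ⟪g j, x i - x j⟫_ℝ - μ * ⟪x j, x i - x j⟫_ℝ := by
      rw [inner_sub_left, real_inner_smul_left]
    rw [hinner] at key
    have h4 : μ / 2 * (‖x i‖ ^ 2 - ‖x j‖ ^ 2)
        = μ / 2 * (2 * ⟪x j, x i - x j⟫_ℝ + ‖x i - x j‖ ^ 2) := by rw [hxx (x i) (x j)]
    rw [ge_iff_le, hQ]
    linarith [key, h4]
  · -- sufficiency
    intro hint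
    by_cases hne : Nonempty I
    · -- nonempty case : construct via smooth_convex_construct
      set hv : I → E := fun i => g i - μ • x i with hhv
      set ev : I → ℝ := fun i => fv i - μ / 2 * ‖x i‖ ^ 2 with hev
      clear_value hv ev
      have interp : ∀ i j, ev j + ⟪hv j, x i - x j⟫_ℝ
          + 1 / (2 * (L - μ)) * ‖hv i - hv j‖ ^ 2 ≤ ev i := by
        intro i j
        have h1 := hint i j
        simp only [hhv, hev]
        have hgg : (g i - μ • x i) - (g j - μ • x j)
            = (g i - g j) - μ • (x i - x j) := by module
        rw [hgg, hnorm (g i - g j) (x i - x j)]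
        have hinner : ⟪g j - μ • x j, x i - x j⟫_ℝ
            = ⟪g j, x i - x j⟫_ℝ - μ * ⟪x j, x i - x j⟫_ℝ := by
          rw [inner_sub_left, real_inner_smul_left]
        rw [hinner]
        have h4 : μ / 2 * (‖x i‖ ^ 2 - ‖x j‖ ^ 2)
            = μ / 2 * (2 * ⟪x j, x i - x j⟫_ℝ + ‖x i - x j‖ ^ 2) := by rw [hxx (x i) (x j)]
        rw [ge_iff_le, hQ] at h1
        linarith [h1, h4]
      obtain ⟨F, S, hgradF, hFlow, hSlip, hFy, hSy⟩ :=
        smooth_convex_construct hν x hv ev interp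
      -- quadratic part
      have hq2 : ∀ z : E, HasGradientAt (fun y : E => μ / 2 * ‖y‖ ^ 2) (μ • z) z := by
        intro z
        have h := hasGradientAt_const_mul_normSq (μ / 2) (by positivity) z
        rw [show (2 * (μ / 2) : ℝ) = μ from by ring] at h
        exact h
      have hgradf : ∀ z : E, HasGradientAt (fun z : E => F z + μ / 2 * ‖z‖ ^ 2)
          (S z + μ • z) z := by
        intro z
        rw [hasGradientAt_iff_hasFDerivAt, map_add]
        exact (hgradF z).hasFDerivAt.add (hq2 z).hasFDerivAt
      have hgradval : ∀ z : E, gradient (fun z : E => F z + μ / 2 * ‖z‖ ^ 2) z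
          = S z + μ • z := fun z => (hgradf z).gradient
      have hquad : ∀ a b : E, μ / 2 * ‖a‖ ^ 2
          = μ / 2 * ‖b‖ ^ 2 + μ * ⟪b, a - b⟫_ℝ + μ / 2 * ‖a - b‖ ^ 2 := by
        intro a b
        have h5 : μ / 2 * (‖a‖ ^ 2 - ‖b‖ ^ 2)
            = μ / 2 * (2 * ⟪b, a - b⟫_ℝ + ‖a - b‖ ^ 2) := by rw [hxx a b]
        nlinarith [h5]
      refine ⟨fun z => F z + μ / 2 * ‖z‖ ^ 2, ?_, ?_, ?_, ?_, ?_, ?_⟩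
      · intro z
        exact (hgradf z).differentiableAt
      · apply convexOn_of_grad_lower (G := fun z => S z + μ • z)
        intro a b
        have h1 := hFlow a b
        have h2 : ⟪S b + μ • b, a - b⟫_ℝ = ⟪S b, a - b⟫_ℝ + μ * ⟪b, a - b⟫_ℝ := by
          rw [inner_add_left, real_inner_smul_left]
        have h3 := hquad a b
        have h4 : (0:ℝ) ≤ μ / 2 * ‖a - b‖ ^ 2 := by positivity
        rw [h2]
        linarith
      · intro a b
        rw [hgradval a, hgradval b]
        have h1 : (S a + μ • a) - (S b + μ • b) = (S a - S b) + μ • (a - b) := by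
          module
        rw [h1]
        have h2 : ‖(S a - S b) + μ • (a - b)‖ ≤ ‖S a - S b‖ + ‖μ • (a - b)‖ :=
          norm_add_le _ _
        have h3 : ‖μ • (a - b)‖ = μ * ‖a - b‖ := by
          rw [norm_smul, Real.norm_eq_abs, abs_of_nonneg hμ]
        have h4 := hSlip a b
        rw [h3] at h2
        have h5 : (L - μ) * ‖a - b‖ + μ * ‖a - b‖ = L * ‖a - b‖ := by ring
        linarith
      · intro a b
        rw [hgradval b]
        have h1 := hFlow a b
        have h2 : ⟪S b + μ • b, a - b⟫_ℝ = ⟪S b, a - b⟫_ℝ + μ * ⟪b, a - b⟫_ℝ := by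
          rw [inner_add_left, real_inner_smul_left]
        have h3 := hquad a b
        rw [ge_iff_le, h2]
        linarith
      · intro i
        have h1 := hFy i
        simp only [hev] at h1
        show F (x i) + μ / 2 * ‖x i‖ ^ 2 = fv i
        rw [h1]
        ring
      · intro i
        rw [hgradval (x i), hSy i]
        simp only [hhv]
        module
    · -- empty case : take the quadratic function
      have hq2 : ∀ z : E, HasGradientAt (fun y : E => μ / 2 * ‖y‖ ^ 2) (μ • z) z := by
        intro z
        have h := hasGradientAt_const_mul_normSq (μ / 2) (by positivity) z
        rw [show (2 * (μ / 2) : ℝ) = μ from by ring] at h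
        exact h
      have hgradval : ∀ z : E, gradient (fun y : E => μ / 2 * ‖y‖ ^ 2) z = μ • z :=
        fun z => (hq2 z).gradient
      have hquad : ∀ a b : E, μ / 2 * ‖a‖ ^ 2
          = μ / 2 * ‖b‖ ^ 2 + μ * ⟪b, a - b⟫_ℝ + μ / 2 * ‖a - b‖ ^ 2 := by
        intro a b
        have h5 : μ / 2 * (‖a‖ ^ 2 - ‖b‖ ^ 2)
            = μ / 2 * (2 * ⟪b, a - b⟫_ℝ + ‖a - b‖ ^ 2) := by rw [hxx a b]
        nlinarith [h5]
      refine ⟨fun y : E => μ / 2 * ‖y‖ ^ 2, ?_, ?_, ?_, ?_, ?_, ?_⟩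
      · intro z; exact (hq2 z).differentiableAt
      · apply convexOn_of_grad_lower (G := fun z : E => μ • z)
        intro a b
        have h2 : ⟪μ • b, a - b⟫_ℝ = μ * ⟪b, a - b⟫_ℝ := real_inner_smul_left _ _ _
        have h3 := hquad a b
        have h4 : (0:ℝ) ≤ μ / 2 * ‖a - b‖ ^ 2 := by positivity
        rw [h2]
        linarith
      · intro a b
        rw [hgradval a, hgradval b]
        have h1 : μ • a - μ • b = μ • (a - b) := by module
        rw [h1, norm_smul, Real.norm_eq_abs, abs_of_nonneg hμ]
        have : (0:ℝ) ≤ ‖a - b‖ := norm_nonneg _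
        nlinarith
      · intro a b
        rw [hgradval b]
        have h2 : ⟪μ • b, a - b⟫_ℝ = μ * ⟪b, a - b⟫_ℝ := real_inner_smul_left _ _ _
        have h3 := hquad a b
        rw [ge_iff_le, h2]
        linarith
      · intro i; exact absurd ⟨i⟩ hne
      · intro i; exact absurd ⟨i⟩ hne

/-- Smooth strongly convex interpolation (Taylor–Hendrickx–Glineur):
existence of a differentiable convex `f` with `L`-Lipschitz gradient and
`μ`-strong convexity interpolating the data `(x_i, g_i, f_i)` is equivalent
to the interpolation inequalities. -/
theorem smooth_strongly_convex_interpolation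
    (n : ℕ) (μ L : ℝ) (hμ : 0 ≤ μ) (hμL : μ < L)
    (I : Type) [Fintype I]
    (x g : I → EuclideanSpace ℝ (Fin n)) (fv : I → ℝ) :
    (∃ f : EuclideanSpace ℝ (Fin n) → ℝ,
      Differentiable ℝ f ∧
      ConvexOn ℝ Set.univ f ∧
      (∀ a b, ‖gradient f a - gradient f b‖ ≤ L * ‖a - b‖) ∧
      (∀ a b, f a ≥ f b + ⟪gradient f b, a - b⟫_ℝ + μ / 2 * ‖a - b‖ ^ 2) ∧
      (∀ i, f (x i) = fv i) ∧ (∀ i, gradient f (x i) = g i)) ↔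
    (∀ i j, fv i ≥ fv j + ⟪g j, x i - x j⟫_ℝ +
      1 / (2 * (1 - μ / L)) *
        (1 / L * ‖g i - g j‖ ^ 2 + μ * ‖x i - x j‖ ^ 2
          - 2 * (μ / L) * ⟪g i - g j, x i - x j⟫_ℝ)) :=
  smooth_strongly_convex_interpolation_general μ L hμ hμL I x g fv
end

section
/- Let 0 ≤ μ < L < ∞, let n ∈ ℕ, let I be a finite index set with |I| elements, and let {(x_i, g_i, f_i)}_{i ∈ I} ⊆ ℝ^n × ℝ^n × ℝ be triplets such that for all i, j ∈ I: f_i ≥ f_j + ⟨g_j, x_i − x_j⟩ + (1/(2(1 − μ/L))) · ( (1/L)‖g_i − g_j‖² + μ‖x_i − x_j‖² − 2(μ/L)⟨g_i − g_j, x_i − x_j⟩ ). Then the function f : ℝ^n → ℝ defined by f(y) = max_{α ∈ Δ} [ (L/2)‖y‖² − ((L − μ)/2)‖y − (1/(L − μ)) Σ_{i ∈ I} α_i (g_i − μ x_i)‖² + Σ_{i ∈ I} α_i ( f_i + (1/(2(L − μ)))‖g_i − L x_i‖² − (L/2)‖x_i‖² ) ], where Δ = {α ∈ ℝ^{|I|}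 : α ≥ 0, Σ_i α_i = 1} is the probability simplex, is differentiable with L-Lipschitz gradient, μ-strongly convex, and satisfies f(x_i) = f_i and ∇f(x_i) = g_i for all i ∈ I. -/
open scoped InnerProductSpace
open Finset

section helpers

variable {F : Type*} [NormedAddCommGroup F] [InnerProductSpace ℝ F]
variable {I : Type} [Fintype I]

noncomputable def sComb (v : I → F) (α : I → ℝ) : F := ∑ i, α i • v i

noncomputable def Vfun (β : ℝ) (v : I → F) (c : I → ℝ) (y : F) (α : I → ℝ) : ℝ :=
  ⟪y, sComb v α⟫_ℝ - ‖sComb v α‖ ^ 2 / (2 * β) + ∑ i, α i * c i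

lemma sComb_comb (v : I → F) (α α' : I → ℝ) (θ : ℝ) :
    sComb v ((1 - θ) • α + θ • α') = sComb v α + θ • (sComb v α' - sComb v α) := by
  simp only [sComb, Pi.add_apply, Pi.smul_apply, smul_eq_mul, smul_sub, Finset.smul_sum]
  rw [← Finset.sum_sub_distrib, ← Finset.sum_add_distrib]
  apply Finset.sum_congr rfl
  intro i _
  module

lemma inner_sComb (v : I → F) (α : I → ℝ) (w : F) :
    ⟪w, sComb v α⟫_ℝ = ∑ i, α i * ⟪w, v i⟫_ℝ := by
  simp [sComb, inner_sum, real_inner_smul_right]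

lemma eps_le_zero {A B : ℝ} (h : ∀ θ : ℝ, 0 < θ → θ ≤ 1 → θ * B ≤ θ ^ 2 * A) : B ≤ 0 := by
  by_contra hB
  push_neg at hB
  set θ : ℝ := min 1 (B / (2 * (|A| + 1))) with hθdef
  have hA1 : (0:ℝ) < |A| + 1 := by positivity
  have hθpos : 0 < θ := lt_min one_pos (by positivity)
  have hθle : θ ≤ 1 := min_le_left _ _
  have h1 := h θ hθpos hθle
  have hθA : θ * A ≤ B / 2 := by
    have hm : θ ≤ B / (2 * (|A| + 1)) := min_le_right _ _
    calc θ * A ≤ θ * |A| := mul_le_mul_of_nonneg_left (le_abs_self A) hθpos.le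
      _ ≤ (B / (2 * (|A| + 1))) * |A| := mul_le_mul_of_nonneg_right hm (abs_nonneg A)
      _ ≤ B / 2 := by
          rw [div_mul_eq_mul_div, div_le_div_iff₀ (by positivity) two_pos]
          nlinarith
  have h2 : θ * (θ * A) ≤ θ * (B / 2) := mul_le_mul_of_nonneg_left hθA hθpos.le
  nlinarith

lemma strong_max {β : ℝ} (hβ : 0 < β) (v : I → F) (c : I → ℝ) (y : F)
    {α α' : I → ℝ} (hα : α ∈ stdSimplex ℝ I) (hα' : α' ∈ stdSimplex ℝ I)
    (hmax : ∀ γ ∈ stdSimplex ℝ I, Vfun β v c y γ ≤ Vfun β v c y α) :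
    Vfun β v c y α' + ‖sComb v α' - sComb v α‖ ^ 2 / (2 * β) ≤ Vfun β v c y α := by
  set s := sComb v α with hs
  set d := sComb v α' - sComb v α with hd
  have hβ' : (2:ℝ) * β ≠ 0 := by positivity
  have key : ∀ θ : ℝ, 0 < θ → θ ≤ 1 →
      θ * (Vfun β v c y α' + ‖d‖ ^ 2 / (2 * β) - Vfun β v c y α)
        ≤ θ ^ 2 * (‖d‖ ^ 2 / (2 * β)) := by
    intro θ hθ0 hθ1
    have hmem : (1 - θ) • α + θ • α' ∈ stdSimplex ℝ I :=
      convex_stdSimplex ℝ I hα hα' (by linarith) (le_of_lt hθ0) (by ring)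
    have h1 := hmax _ hmem
    have hexp : Vfun β v c y ((1 - θ) • α + θ • α')
        = Vfun β v c y α + θ * (Vfun β v c y α' + ‖d‖ ^ 2 / (2 * β) - Vfun β v c y α)
          - θ ^ 2 * (‖d‖ ^ 2 / (2 * β)) := by
      have hsum : ∑ i, ((1 - θ) • α + θ • α') i * c i
          = (1 - θ) * ∑ i, α i * c i + θ * ∑ i, α' i * c i := by
        simp only [Pi.add_apply, Pi.smul_apply, smul_eq_mul, add_mul,
          Finset.sum_add_distrib, Finset.mul_sum, mul_assoc]
      have hsd : sComb v α' = s + d := by rw [hd]; abel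
      rw [Vfun, Vfun, Vfun, sComb_comb, hsum, ← hs, hsd]
      rw [inner_add_right, inner_add_right, real_inner_smul_right]
      rw [norm_add_sq_real, norm_add_sq_real, real_inner_smul_right, norm_smul,
        Real.norm_eq_abs]
      rw [mul_pow, sq_abs]
      simp only [add_sub_cancel_left]
      field_simp
      ring
    rw [hexp] at h1
    linarith
  have := eps_le_zero key
  linarith

end helpers

set_option maxHeartbeats 2000000 in
/-- Smooth strongly convex extension (Drori–Taylor): the explicit maximum over the
probability simplex of the given quadratic expressions is an `L`-smooth
`μ`-strongly convex function interpolating the data `(x_i, g_i, f_i)`. -/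
theorem smooth_strongly_convex_extension
    (n : ℕ) (μ L : ℝ) (hμ : 0 ≤ μ) (hμL : μ < L)
    (I : Type) [Fintype I] [Nonempty I]
    (x g : I → EuclideanSpace ℝ (Fin n)) (fv : I → ℝ)
    (hinterp : ∀ i j, fv i ≥ fv j + ⟪g j, x i - x j⟫_ℝ +
      1 / (2 * (1 - μ / L)) *
        (1 / L * ‖g i - g j‖ ^ 2 + μ * ‖x i - x j‖ ^ 2
          - 2 * (μ / L) * ⟪g i - g j, x i - x j⟫_ℝ))
    (f : EuclideanSpace ℝ (Fin n) → ℝ)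
    (hf : ∀ y, f y = ⨆ α : stdSimplex ℝ I,
      (L / 2 * ‖y‖ ^ 2
        - (L - μ) / 2 * ‖y - (1 / (L - μ)) • ∑ i, α.1 i • (g i - μ • x i)‖ ^ 2
        + ∑ i, α.1 i * (fv i + 1 / (2 * (L - μ)) * ‖g i - L • x i‖ ^ 2
            - L / 2 * ‖x i‖ ^ 2))) :
    Differentiable ℝ f ∧
    (∀ a b, ‖gradient f a - gradient f b‖ ≤ L * ‖a - b‖) ∧
    (∀ a b, f a ≥ f b + ⟪gradient f b, a - b⟫_ℝ + μ / 2 * ‖a - b‖ ^ 2) ∧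
    (∀ i, f (x i) = fv i) ∧ (∀ i, gradient f (x i) = g i) := by
  classical
  have hL : (0:ℝ) < L := lt_of_le_of_lt hμ hμL
  have hβ : (0:ℝ) < L - μ := by linarith
  set v : I → EuclideanSpace ℝ (Fin n) := fun i => g i - μ • x i with hv
  set c : I → ℝ := fun i =>
    fv i + 1 / (2 * (L - μ)) * ‖g i - L • x i‖ ^ 2 - L / 2 * ‖x i‖ ^ 2 with hc
  -- continuity of the inner objective in α
  have hcont : ∀ y : EuclideanSpace ℝ (Fin n), Continuous fun α : I → ℝ => Vfun (L - μ) v c y α := by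
    intro y
    have hs : Continuous fun α : I → ℝ => sComb v α := by
      unfold sComb
      exact continuous_finset_sum _ fun i _ => (continuous_apply i).smul continuous_const
    unfold Vfun
    exact ((continuous_const.inner hs).sub ((hs.norm.pow 2).div_const _)).add
      (continuous_finset_sum _ fun i _ => (continuous_apply i).mul continuous_const)
  have hne : (stdSimplex ℝ I).Nonempty :=
    ⟨_, ite_eq_mem_stdSimplex ℝ (Classical.arbitrary I)⟩
  haveI : Nonempty (stdSimplex ℝ I) := hne.to_subtype
  have hmaxex : ∀ y : EuclideanSpace ℝ (Fin n), ∃ α ∈ stdSimplex ℝ I,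
      ∀ γ ∈ stdSimplex ℝ I, Vfun (L - μ) v c y γ ≤ Vfun (L - μ) v c y α :=
    fun y => by
      obtain ⟨a, ha, hmax⟩ := (isCompact_stdSimplex ℝ I).exists_isMaxOn hne (hcont y).continuousOn
      exact ⟨a, ha, fun γ hγ => hmax hγ⟩
  choose A hA1 hA2 using hmaxex
  -- the sup formula
  have hrw : ∀ (y : EuclideanSpace ℝ (Fin n)) (α : I → ℝ),
      (L / 2 * ‖y‖ ^ 2
        - (L - μ) / 2 * ‖y - (1 / (L - μ)) • ∑ i, α i • (g i - μ • x i)‖ ^ 2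
        + ∑ i, α i * (fv i + 1 / (2 * (L - μ)) * ‖g i - L • x i‖ ^ 2
            - L / 2 * ‖x i‖ ^ 2))
      = μ / 2 * ‖y‖ ^ 2 + Vfun (L - μ) v c y α := by
    intro y α
    have h1 : L - μ ≠ 0 := ne_of_gt hβ
    have hscomb : (∑ i, α i • (g i - μ • x i)) = sComb v α := by
      simp [sComb, hv]
    rw [hscomb, Vfun]
    have hcc : ∀ i, fv i + 1 / (2 * (L - μ)) * ‖g i - L • x i‖ ^ 2 - L / 2 * ‖x i‖ ^ 2
        = c i := fun i => rfl
    simp only [hcc]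
    simp only [norm_sub_sq_real, real_inner_smul_right, norm_smul, Real.norm_eq_abs,
      mul_pow, sq_abs]
    field_simp
    ring
  have hfy : ∀ y : EuclideanSpace ℝ (Fin n), f y = μ / 2 * ‖y‖ ^ 2 + Vfun (L - μ) v c y (A y) := by
    intro y
    rw [hf y]
    have hbdd : BddAbove (Set.range fun α : stdSimplex ℝ I =>
        (L / 2 * ‖y‖ ^ 2
        - (L - μ) / 2 * ‖y - (1 / (L - μ)) • ∑ i, α.1 i • (g i - μ • x i)‖ ^ 2
        + ∑ i, α.1 i * (fv i + 1 / (2 * (L - μ)) * ‖g i - L • x i‖ ^ 2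
            - L / 2 * ‖x i‖ ^ 2))) := by
      refine ⟨μ / 2 * ‖y‖ ^ 2 + Vfun (L - μ) v c y (A y), ?_⟩
      rintro r ⟨α, rfl⟩
      have := hrw y α.1
      dsimp only at this ⊢
      rw [this]
      linarith [hA2 y α.1 α.2]
    apply le_antisymm
    · refine ciSup_le fun α => ?_
      have := hrw y α.1
      rw [this]
      linarith [hA2 y α.1 α.2]
    · have h := le_ciSup hbdd (⟨A y, hA1 y⟩ : stdSimplex ℝ I)
      dsimp only at h
      rwa [hrw y (A y)] at h
  -- translation identity
  have hVtrans : ∀ (y y' : EuclideanSpace ℝ (Fin n)) (γ : I → ℝ),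
      Vfun (L - μ) v c y' γ = Vfun (L - μ) v c y γ + ⟪y' - y, sComb v γ⟫_ℝ := by
    intro y y' γ
    rw [Vfun, Vfun, inner_sub_left]
    ring
  -- Lipschitz property of the maximizing combination
  have hσLip : ∀ y y' : EuclideanSpace ℝ (Fin n), ‖sComb v (A y) - sComb v (A y')‖ ≤ (L - μ) * ‖y' - y‖ := by
    intro y y'
    have h1 := strong_max hβ v c y (hA1 y) (hA1 y') (hA2 y)
    have h2 := strong_max hβ v c y' (hA1 y') (hA1 y) (hA2 y')
    rw [hVtrans y y' (A y), hVtrans y y' (A y')] at h2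
    set d := sComb v (A y) - sComb v (A y') with hd
    have hdd : sComb v (A y') - sComb v (A y) = -d := by rw [hd]; abel
    rw [hdd, norm_neg] at h1
    have hsum : ‖d‖ ^ 2 / (L - μ) ≤ ⟪y' - y, sComb v (A y') - sComb v (A y)⟫_ℝ := by
      rw [inner_sub_right]
      have h3 : ‖d‖ ^ 2 / (2 * (L - μ)) + ‖d‖ ^ 2 / (2 * (L - μ)) = ‖d‖ ^ 2 / (L - μ) := by
        field_simp; ring
      linarith
    have hcs : ⟪y' - y, sComb v (A y') - sComb v (A y)⟫_ℝ ≤ ‖y' - y‖ * ‖d‖ := by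
      calc ⟪y' - y, sComb v (A y') - sComb v (A y)⟫_ℝ
          ≤ ‖y' - y‖ * ‖sComb v (A y') - sComb v (A y)‖ := real_inner_le_norm _ _
        _ = ‖y' - y‖ * ‖d‖ := by rw [hdd, norm_neg]
    rcases eq_or_lt_of_le (norm_nonneg d) with h0 | h0
    · rw [← h0]; positivity
    · have := le_trans hsum hcs
      rw [div_le_iff₀ hβ] at this  -- ‖d‖^2 ≤ ‖y'-y‖*‖d‖*(L-μ)
      nlinarith
  -- lower bound (strong convexity)
  have hlow : ∀ y y' : EuclideanSpace ℝ (Fin n),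
      f y + ⟪μ • y + sComb v (A y), y' - y⟫_ℝ + μ / 2 * ‖y' - y‖ ^ 2 ≤ f y' := by
    intro y y'
    rw [hfy y, hfy y']
    have h1 : Vfun (L - μ) v c y (A y) + ⟪y' - y, sComb v (A y)⟫_ℝ
        ≤ Vfun (L - μ) v c y' (A y') := by
      rw [← hVtrans y y' (A y)]
      exact hA2 y' (A y) (hA1 y)
    have e2 := norm_add_sq_real y (y' - y)
    have hyy : y + (y' - y) = y' := by abel
    rw [hyy] at e2
    rw [real_inner_comm (sComb v (A y)) (y' - y)] at h1
    rw [inner_add_left, real_inner_smul_left]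
    nlinarith [h1, e2]
  -- upper bound
  have hup : ∀ y y' : EuclideanSpace ℝ (Fin n),
      f y' ≤ f y + ⟪μ • y + sComb v (A y), y' - y⟫_ℝ + L * ‖y' - y‖ ^ 2 := by
    intro y y'
    rw [hfy y, hfy y']
    have h1 : Vfun (L - μ) v c y' (A y')
        = Vfun (L - μ) v c y (A y') + ⟪y' - y, sComb v (A y')⟫_ℝ := hVtrans y y' (A y')
    have h2 : Vfun (L - μ) v c y (A y') ≤ Vfun (L - μ) v c y (A y) := hA2 y (A y') (hA1 y')
    have h3 : ⟪y' - y, sComb v (A y') - sComb v (A y)⟫_ℝ ≤ (L - μ) * ‖y' - y‖ ^ 2 := by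
      calc ⟪y' - y, sComb v (A y') - sComb v (A y)⟫_ℝ
          ≤ ‖y' - y‖ * ‖sComb v (A y') - sComb v (A y)‖ := real_inner_le_norm _ _
        _ ≤ ‖y' - y‖ * ((L - μ) * ‖y' - y‖) := by
            have := hσLip y y'
            have hdd : ‖sComb v (A y') - sComb v (A y)‖
                = ‖sComb v (A y) - sComb v (A y')‖ := norm_sub_rev _ _
            rw [hdd]
            exact mul_le_mul_of_nonneg_left this (norm_nonneg _)
        _ = (L - μ) * ‖y' - y‖ ^ 2 := by ring
    have e2 := norm_add_sq_real y (y' - y)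
    have hyy : y + (y' - y) = y' := by abel
    rw [hyy] at e2
    rw [inner_add_left, real_inner_smul_left]
    rw [inner_sub_right] at h3
    rw [real_inner_comm (y' - y) (sComb v (A y))]
    nlinarith [h1, h2, h3, e2]
  -- gradient
  have hgrad : ∀ y : EuclideanSpace ℝ (Fin n), HasGradientAt f (μ • y + sComb v (A y)) y := by
    intro y
    rw [hasGradientAt_iff_isLittleO, Asymptotics.isLittleO_iff]
    intro ε hε
    have hεL : 0 < ε / L := by positivity
    filter_upwards [Metric.closedBall_mem_nhds y hεL] with y' hy'
    have hd : ‖y' - y‖ ≤ ε / L := by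
      rw [Metric.mem_closedBall, dist_eq_norm] at hy'
      exact hy'
    have h1 := hlow y y'
    have h2 := hup y y'
    rw [Real.norm_eq_abs, abs_le]
    constructor
    · have h00 : 0 ≤ μ / 2 * ‖y' - y‖ ^ 2 := by positivity
      have h0 : (0:ℝ) ≤ ε * ‖y' - y‖ := by positivity
      linarith
    · have : L * ‖y' - y‖ ^ 2 ≤ ε * ‖y' - y‖ := by
        have := mul_le_mul_of_nonneg_left hd (norm_nonneg (y' - y))
        calc L * ‖y' - y‖ ^ 2 = L * (‖y' - y‖ * ‖y' - y‖) := by ring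
          _ ≤ L * (‖y' - y‖ * (ε / L)) := by
              apply mul_le_mul_of_nonneg_left _ hL.le
              exact mul_le_mul_of_nonneg_left hd (norm_nonneg _)
          _ = ε * ‖y' - y‖ := by field_simp
      linarith
  have hgradeq : ∀ y : EuclideanSpace ℝ (Fin n), gradient f y = μ • y + sComb v (A y) :=
    fun y => (hgrad y).gradient
  -- interpolation inequality per pair
  have hineq : ∀ i j, fv j + ⟪g j, x i - x j⟫_ℝ + μ / 2 * ‖x i - x j‖ ^ 2
      + ‖v i - v j‖ ^ 2 / (2 * (L - μ)) ≤ fv i := by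
    intro i j
    have h0 := hinterp i j
    have hid : 1 / (2 * (1 - μ / L)) *
        (1 / L * ‖g i - g j‖ ^ 2 + μ * ‖x i - x j‖ ^ 2
          - 2 * (μ / L) * ⟪g i - g j, x i - x j⟫_ℝ)
        = μ / 2 * ‖x i - x j‖ ^ 2 + ‖v i - v j‖ ^ 2 / (2 * (L - μ)) := by
      have h1 : L - μ ≠ 0 := ne_of_gt hβ
      have h2 : (1 - μ / L) ≠ 0 := by
        have : μ / L < 1 := (div_lt_one hL).2 hμL
        linarith
      have hvv : v i - v j = (g i - g j) - μ • (x i - x j) := by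
        simp only [hv]; module
      rw [hvv]
      simp only [norm_sub_sq_real, inner_sub_left, inner_sub_right, real_inner_smul_left,
        real_inner_smul_right, norm_smul, Real.norm_eq_abs, mul_pow, sq_abs]
      field_simp
      ring
    rw [hid] at h0
    linarith
  -- the value identity at data points
  have perj : ∀ i j : I,
      (fv j + ⟪g j, x i - x j⟫_ℝ + μ / 2 * ‖x i - x j‖ ^ 2)
        + ‖v i - v j‖ ^ 2 / (2 * (L - μ))
      = c j + ⟪x i, v j⟫_ℝ + μ / 2 * ‖x i‖ ^ 2 + ‖v i‖ ^ 2 / (2 * (L - μ))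
        - ⟪v i, v j⟫_ℝ / (L - μ) := by
    intro i j
    have h1 : L - μ ≠ 0 := ne_of_gt hβ
    simp only [hv, hc]
    simp only [norm_sub_sq_real, inner_sub_left, inner_sub_right, real_inner_smul_left,
      real_inner_smul_right, norm_smul, Real.norm_eq_abs, mul_pow, sq_abs,
      real_inner_comm (x j) (x i), real_inner_comm (g j) (g i), real_inner_comm (g j) (x i),
      real_inner_comm (g i) (x j), real_inner_comm (g j) (x j), real_inner_comm (g i) (x i)]
    field_simp
    ring
  have hVid : ∀ (i : I) (α : I → ℝ), (∑ j, α j) = 1 →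
      Vfun (L - μ) v c (x i) α
      = (∑ j, α j * ((fv j + ⟪g j, x i - x j⟫_ℝ + μ / 2 * ‖x i - x j‖ ^ 2)
          + ‖v i - v j‖ ^ 2 / (2 * (L - μ))))
        - μ / 2 * ‖x i‖ ^ 2 - ‖v i - sComb v α‖ ^ 2 / (2 * (L - μ)) := by
    intro i α hα1
    have h1 : L - μ ≠ 0 := ne_of_gt hβ
    have hsum : (∑ j, α j * ((fv j + ⟪g j, x i - x j⟫_ℝ + μ / 2 * ‖x i - x j‖ ^ 2)
          + ‖v i - v j‖ ^ 2 / (2 * (L - μ))))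
        = ∑ j, α j * (c j + ⟪x i, v j⟫_ℝ + μ / 2 * ‖x i‖ ^ 2 + ‖v i‖ ^ 2 / (2 * (L - μ))
          - ⟪v i, v j⟫_ℝ / (L - μ)) := by
      apply Finset.sum_congr rfl
      intro j _
      rw [perj i j]
    rw [hsum]
    have hexp : ∀ j, α j * (c j + ⟪x i, v j⟫_ℝ + μ / 2 * ‖x i‖ ^ 2 + ‖v i‖ ^ 2 / (2 * (L - μ))
          - ⟪v i, v j⟫_ℝ / (L - μ))
        = α j * c j + α j * ⟪x i, v j⟫_ℝ
          + α j * (μ / 2 * ‖x i‖ ^ 2 + ‖v i‖ ^ 2 / (2 * (L - μ)))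
          - (α j * ⟪v i, v j⟫_ℝ) / (L - μ) := by
      intro j; field_simp; ring
    simp only [hexp]
    rw [Finset.sum_sub_distrib, Finset.sum_add_distrib, Finset.sum_add_distrib,
      ← Finset.sum_mul, hα1, ← Finset.sum_div, ← inner_sComb, ← inner_sComb]
    have hns : ‖v i - sComb v α‖ ^ 2
        = ‖v i‖ ^ 2 - 2 * ⟪v i, sComb v α⟫_ℝ + ‖sComb v α‖ ^ 2 := norm_sub_sq_real _ _
    have scalar : ∀ b S1 S2 S3 S4 S6 S7 : ℝ, b ≠ 0 →
        S1 - S2 / (2 * b) + S3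
        = S3 + S1 + 1 * (μ / 2 * S7 + S6 / (2 * b)) - S4 / b - μ / 2 * S7
          - (S6 - 2 * S4 + S2) / (2 * b) := by
      intro b S1 S2 S3 S4 S6 S7 hb
      field_simp
      ring
    rw [Vfun, hns]
    linear_combination scalar (L - μ) ⟪x i, sComb v α⟫_ℝ (‖sComb v α‖ ^ 2)
      (∑ j, α j * c j) ⟪v i, sComb v α⟫_ℝ (‖v i‖ ^ 2) (‖x i‖ ^ 2) h1
  -- vertex coordinates
  have hδ : ∀ i : I, (fun j => if i = j then (1:ℝ) else 0) ∈ stdSimplex ℝ I :=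
    fun i => ite_eq_mem_stdSimplex ℝ i
  have hδs : ∀ i : I, sComb v (fun j => if i = j then (1:ℝ) else 0) = v i := by
    intro i
    simp [sComb, ite_smul]
  have hvertex : ∀ i : I,
      Vfun (L - μ) v c (x i) (fun j => if i = j then (1:ℝ) else 0)
        = fv i - μ / 2 * ‖x i‖ ^ 2 := by
    intro i
    rw [hVid i _ (hδ i).2, hδs i]
    simp [sub_self, Finset.sum_ite_eq, ite_mul]
  have hVle : ∀ (i : I) (α : I → ℝ), α ∈ stdSimplex ℝ I →
      Vfun (L - μ) v c (x i) α + μ / 2 * ‖x i‖ ^ 2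
        + ‖v i - sComb v α‖ ^ 2 / (2 * (L - μ)) ≤ fv i := by
    intro i α hα
    rw [hVid i α hα.2]
    have hle : (∑ j, α j * ((fv j + ⟪g j, x i - x j⟫_ℝ + μ / 2 * ‖x i - x j‖ ^ 2)
          + ‖v i - v j‖ ^ 2 / (2 * (L - μ)))) ≤ ∑ j, α j * fv i := by
      apply Finset.sum_le_sum
      intro j _
      exact mul_le_mul_of_nonneg_left (by linarith [hineq i j]) (hα.1 j)
    rw [← Finset.sum_mul, hα.2, one_mul] at hle
    linarith
  -- value interpolation
  have hfx : ∀ i, f (x i) = fv i := by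
    intro i
    rw [hfy (x i)]
    have h1 := hVle i (A (x i)) (hA1 (x i))
    have h2 : Vfun (L - μ) v c (x i) (fun j => if i = j then (1:ℝ) else 0)
        ≤ Vfun (L - μ) v c (x i) (A (x i)) := hA2 (x i) _ (hδ i)
    rw [hvertex i] at h2
    have h3 : 0 ≤ ‖v i - sComb v (A (x i))‖ ^ 2 / (2 * (L - μ)) := by positivity
    linarith
  -- gradient interpolation
  have hgx : ∀ i, gradient f (x i) = g i := by
    intro i
    rw [hgradeq (x i)]
    have h1 := hVle i (A (x i)) (hA1 (x i))
    have h2 : Vfun (L - μ) v c (x i) (fun j => if i = j then (1:ℝ) else 0)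
        ≤ Vfun (L - μ) v c (x i) (A (x i)) := hA2 (x i) _ (hδ i)
    rw [hvertex i] at h2
    have h3 : ‖v i - sComb v (A (x i))‖ ^ 2 / (2 * (L - μ)) ≤ 0 := by linarith
    have h4 : ‖v i - sComb v (A (x i))‖ = 0 := by
      by_contra hne0
      have : 0 < ‖v i - sComb v (A (x i))‖ ^ 2 / (2 * (L - μ)) := by
        have := (norm_nonneg (v i - sComb v (A (x i)))).lt_of_ne (Ne.symm hne0)
        positivity
      linarith
    have h5 : sComb v (A (x i)) = v i := by
      rw [norm_eq_zero, sub_eq_zero] at h4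
      exact h4.symm
    rw [h5, hv]
    module
  refine ⟨fun y => (hgrad y).differentiableAt, ?_, ?_, hfx, hgx⟩
  · intro a b
    rw [hgradeq a, hgradeq b]
    have hab : μ • a + sComb v (A a) - (μ • b + sComb v (A b))
        = μ • (a - b) + (sComb v (A a) - sComb v (A b)) := by module
    rw [hab]
    calc ‖μ • (a - b) + (sComb v (A a) - sComb v (A b))‖
        ≤ ‖μ • (a - b)‖ + ‖sComb v (A a) - sComb v (A b)‖ := norm_add_le _ _
      _ ≤ μ * ‖a - b‖ + (L - μ) * ‖b - a‖ := by
          have h1 : ‖μ • (a - b)‖ = μ * ‖a - b‖ := by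
            rw [norm_smul, Real.norm_eq_abs, abs_of_nonneg hμ]
          rw [h1]
          linarith [hσLip a b]
      _ = L * ‖a - b‖ := by rw [norm_sub_rev b a]; ring
  · intro a b
    have := hlow b a
    rw [hgradeq b]
    linarith
end

section
/- Let 0 < μ < L < ∞ and q = μ/L. Let f : ℝ^n → ℝ be L-smooth and μ-strongly convex. Let x_{k−1}, d_{k−1} ∈ ℝ^n with ∇f(x_{k−1}) ≠ 0 and ⟨∇f(x_{k−1}), d_{k−1}⟩ = ‖∇f(x_{k−1})‖². Let γ_{k−1} ∈ ℝ minimize γ ↦ f(x_{k−1} − γ d_{k−1}) over ℝ, set x_k = x_{k−1} − γ_{k−1} d_{k−1}, let β_{k−1} = (‖∇f(x_k)‖² − ⟨∇f(x_k), ∇f(x_{k−1})⟩)/‖∇f(x_{k−1})‖² (the Polak–Ribière–Polyak update), and set d_k = ∇f(x_k) + β_{k−1} d_{k−1}. Then ‖d_k‖² ≤ ((1 + q)²/(4q)) ‖∇f(x_k)‖². -/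
set_option maxHeartbeats 4000000

open scoped InnerProductSpace

section PrpAux

variable {E : Type*} [NormedAddCommGroup E] [InnerProductSpace ℝ E] [CompleteSpace E]

lemma prp_lineHasDerivAt (f : E → ℝ) (hdiff : Differentiable ℝ f) (b v : E) (t : ℝ) :
    HasDerivAt (fun s : ℝ => f (b + s • v)) ⟪gradient f (b + t • v), v⟫_ℝ t := by
  have h1 : HasDerivAt (fun s : ℝ => b + s • v) v t := by
    simpa using ((hasDerivAt_id t).smul_const v).const_add b
  have h2 : HasFDerivAt f (InnerProductSpace.toDual ℝ E (gradient f (b + t • v))) (b + t • v) :=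
    hasGradientAt_iff_hasFDerivAt.mp (hdiff _).hasGradientAt
  exact h2.comp_hasDerivAt t h1

lemma prp_descent_lemma (f : E → ℝ) (L : ℝ) (hdiff : Differentiable ℝ f)
    (hsmooth : ∀ a b, ‖gradient f a - gradient f b‖ ≤ L * ‖a - b‖) (a b : E) :
    f a ≤ f b + ⟪gradient f b, a - b⟫_ℝ + L / 2 * ‖a - b‖ ^ 2 := by
  set v := a - b with hv
  set ψ : ℝ → ℝ := fun t => f (b + t • v) - t * ⟪gradient f b, v⟫_ℝ - L / 2 * t ^ 2 * ‖v‖ ^ 2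
    with hψ
  have hder : ∀ t : ℝ, HasDerivAt ψ
      (⟪gradient f (b + t • v), v⟫_ℝ - ⟪gradient f b, v⟫_ℝ - L * t * ‖v‖ ^ 2) t := by
    intro t
    have h1 := prp_lineHasDerivAt f hdiff b v t
    have h2 : HasDerivAt (fun t : ℝ => t * ⟪gradient f b, v⟫_ℝ) ⟪gradient f b, v⟫_ℝ t := by
      simpa using (hasDerivAt_id t).mul_const _
    have h3 : HasDerivAt (fun t : ℝ => L / 2 * t ^ 2 * ‖v‖ ^ 2) (L * t * ‖v‖ ^ 2) t := by
      have := ((hasDerivAt_pow 2 t).const_mul (L / 2)).mul_const (‖v‖ ^ 2)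
      exact this.congr_deriv (by rw [Nat.cast_ofNat, show (2:ℕ) - 1 = 1 from rfl, pow_one]; ring)
    exact (h1.sub h2).sub h3
  have hmono : ψ 1 ≤ ψ 0 := by
    have hc : ContinuousOn ψ (Set.Icc 0 1) := fun x _ => (hder x).continuousAt.continuousWithinAt
    have hd0 : ∀ x ∈ interior (Set.Icc (0:ℝ) 1), deriv ψ x ≤ 0 := by
      intro x hx
      rw [interior_Icc] at hx
      rw [(hder x).deriv]
      have h4 : ⟪gradient f (b + x • v) - gradient f b, v⟫_ℝ ≤ L * x * ‖v‖ ^ 2 := by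
        calc ⟪gradient f (b + x • v) - gradient f b, v⟫_ℝ
            ≤ ‖gradient f (b + x • v) - gradient f b‖ * ‖v‖ := real_inner_le_norm _ _
          _ ≤ (L * ‖(b + x • v) - b‖) * ‖v‖ := by
              gcongr; exact hsmooth _ _
          _ = L * x * ‖v‖ ^ 2 := by
              simp [norm_smul, abs_of_pos hx.1]; ring
      rw [inner_sub_left] at h4
      linarith
    have := antitoneOn_of_deriv_nonpos (convex_Icc (0:ℝ) 1) hc
      (fun x hx => (hder x).differentiableAt.differentiableWithinAt) hd0
    exact this (by simp) (by simp) zero_le_one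
  simp only [hψ, one_smul, zero_smul, add_zero, one_pow, mul_one, zero_pow, mul_zero, zero_mul,
    sub_zero] at hmono
  have : b + v = a := by rw [hv]; abel
  rw [this] at hmono
  linarith

lemma prp_coco_lemma (H : E → ℝ) (G : E → E) (K : ℝ) (hK : 0 < K)
    (conv : ∀ a b : E, H b + ⟪G b, a - b⟫_ℝ ≤ H a)
    (desc : ∀ a b : E, H a ≤ H b + ⟪G b, a - b⟫_ℝ + K / 2 * ‖a - b‖ ^ 2) :
    ∀ a b : E, ‖G a - G b‖ ^ 2 ≤ K * ⟪G a - G b, a - b⟫_ℝ := by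
  have key : ∀ x y : E, H y + ⟪G y, x - y⟫_ℝ + 1 / (2 * K) * ‖G x - G y‖ ^ 2 ≤ H x := by
    intro x y
    set u := G x - G y with hu
    set z := x - K⁻¹ • u with hz
    have h1 := desc z x
    have h2 := conv z y
    have e1 : z - x = -(K⁻¹ • u) := by rw [hz]; abel
    have e2 : ⟪G x, z - x⟫_ℝ = -(K⁻¹ * ⟪G x, u⟫_ℝ) := by
      rw [e1, inner_neg_right, inner_smul_right]
    have e3 : ‖z - x‖ ^ 2 = K⁻¹ ^ 2 * ‖u‖ ^ 2 := by
      rw [e1, norm_neg, norm_smul]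
      simp [abs_of_pos (inv_pos.mpr hK), mul_pow]
    have e4 : ⟪G y, z - y⟫_ℝ = ⟪G y, x - y⟫_ℝ - K⁻¹ * ⟪G y, u⟫_ℝ := by
      have : z - y = (x - y) - K⁻¹ • u := by rw [hz]; abel
      rw [this, inner_sub_right, inner_smul_right]
    have e5 : ⟪G x, u⟫_ℝ - ⟪G y, u⟫_ℝ = ‖u‖ ^ 2 := by
      rw [← inner_sub_left, ← hu, real_inner_self_eq_norm_sq]
    rw [e2, e3] at h1
    rw [e4] at h2
    have hK' : K ≠ 0 := ne_of_gt hK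
    have key1 : K⁻¹ * ⟪G x, u⟫_ℝ - K⁻¹ * ⟪G y, u⟫_ℝ = K⁻¹ * ‖u‖ ^ 2 := by
      rw [← mul_sub, e5]
    have key2 : K / 2 * (K⁻¹ ^ 2 * ‖u‖ ^ 2) = K⁻¹ / 2 * ‖u‖ ^ 2 := by
      field_simp
    have key3 : (1:ℝ) / (2 * K) = K⁻¹ / 2 := by
      rw [one_div, mul_inv, inv_eq_one_div 2]; ring
    have key4 : K⁻¹ * ‖u‖ ^ 2 = K⁻¹ / 2 * ‖u‖ ^ 2 + K⁻¹ / 2 * ‖u‖ ^ 2 := by ring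
    rw [key3]
    linarith
  intro a b
  have h1 := key a b
  have h2 := key b a
  have e1 : ⟪G a, b - a⟫_ℝ = -⟪G a, a - b⟫_ℝ := by
    rw [← inner_neg_right]; congr 1; abel
  have e2 : ‖G b - G a‖ = ‖G a - G b‖ := by rw [← norm_neg]; congr 1; abel
  have e3 : ⟪G a - G b, a - b⟫_ℝ = ⟪G a, a - b⟫_ℝ - ⟪G b, a - b⟫_ℝ := inner_sub_left _ _ _
  rw [e1] at h2
  rw [e2] at h2
  have hK' : K ≠ 0 := ne_of_gt hK
  have h7 : (1 / K) * ‖G a - G b‖ ^ 2 ≤ ⟪G a - G b, a - b⟫_ℝ := by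
    rw [e3]
    have : 1 / (2 * K) * ‖G a - G b‖ ^ 2 + 1 / (2 * K) * ‖G a - G b‖ ^ 2
        = (1 / K) * ‖G a - G b‖ ^ 2 := by
      have : (1:ℝ) / (2 * K) + 1 / (2 * K) = 1 / K := by
        field_simp
        norm_num
      nlinarith [this]
    linarith
  have h8 := mul_le_mul_of_nonneg_left h7 hK.le
  have h9 : K * ((1 / K) * ‖G a - G b‖ ^ 2) = ‖G a - G b‖ ^ 2 := by
    field_simp
  linarith

lemma prp_interp_lemma (f : E → ℝ) (μ L : ℝ) (hμ : 0 < μ) (hμL : μ < L)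
    (hdesc : ∀ a b : E, f a ≤ f b + ⟪gradient f b, a - b⟫_ℝ + L / 2 * ‖a - b‖ ^ 2)
    (hsc : ∀ a b : E, f a ≥ f b + ⟪gradient f b, a - b⟫_ℝ + μ / 2 * ‖a - b‖ ^ 2)
    (a b : E) :
    ‖gradient f a - gradient f b‖ ^ 2 + μ * L * ‖a - b‖ ^ 2
      ≤ (L + μ) * ⟪gradient f a - gradient f b, a - b⟫_ℝ := by
  set H : E → ℝ := fun x => f x - μ / 2 * ‖x‖ ^ 2 with hH
  set G : E → E := fun x => gradient f x - μ • x with hG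
  have expand : ∀ x y : E, ⟪G y, x - y⟫_ℝ = ⟪gradient f y, x - y⟫_ℝ - μ * ⟪y, x - y⟫_ℝ := by
    intro x y; simp [hG, inner_sub_left, real_inner_smul_left]
  have normsq : ∀ x y : E, ‖x - y‖ ^ 2 = ‖x‖ ^ 2 - 2 * ⟪y, x - y⟫_ℝ - ‖y‖ ^ 2 := by
    intro x y
    have h := real_inner_self_eq_norm_sq (x - y)
    rw [inner_sub_left, inner_sub_right, inner_sub_right] at h
    have h2 := real_inner_self_eq_norm_sq x
    have h3 := real_inner_self_eq_norm_sq y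
    have h4 : ⟪y, x - y⟫_ℝ = ⟪y, x⟫_ℝ - ⟪y, y⟫_ℝ := inner_sub_right _ _ _
    have h5 : ⟪x, y⟫_ℝ = ⟪y, x⟫_ℝ := real_inner_comm _ _
    nlinarith
  have conv : ∀ x y : E, H y + ⟪G y, x - y⟫_ℝ ≤ H x := by
    intro x y
    have h := hsc x y
    have e := expand x y
    have n := normsq x y
    simp only [hH]
    nlinarith
  have desc : ∀ x y : E, H x ≤ H y + ⟪G y, x - y⟫_ℝ + (L - μ) / 2 * ‖x - y‖ ^ 2 := by
    intro x y
    have h := hdesc x y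
    have e := expand x y
    have n := normsq x y
    simp only [hH]
    nlinarith
  have hco := prp_coco_lemma H G (L - μ) (by linarith) conv desc a b
  have eG : G a - G b = (gradient f a - gradient f b) - μ • (a - b) := by
    simp only [hG, smul_sub]; abel
  rw [eG] at hco
  have e1 : ‖(gradient f a - gradient f b) - μ • (a - b)‖ ^ 2
      = ‖gradient f a - gradient f b‖ ^ 2 - 2 * μ * ⟪gradient f a - gradient f b, a - b⟫_ℝ
        + μ ^ 2 * ‖a - b‖ ^ 2 := by
    rw [norm_sub_sq_real, norm_smul, real_inner_smul_right]
    simp [abs_of_pos hμ, mul_pow]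
    ring
  have e2 : ⟪(gradient f a - gradient f b) - μ • (a - b), a - b⟫_ℝ
      = ⟪gradient f a - gradient f b, a - b⟫_ℝ - μ * ‖a - b‖ ^ 2 := by
    rw [inner_sub_left, real_inner_smul_left, real_inner_self_eq_norm_sq]
  rw [e1, e2] at hco
  nlinarith

end PrpAux

/-- Worst-case search direction for Polak–Ribière–Polyak: one PRP iteration with
exact line search on an `L`-smooth `μ`-strongly convex function produces a search
direction `d_k` with `‖d_k‖² ≤ ((1 + q)²/(4q))‖∇f(x_k)‖²`, where `q = μ/L`. -/
theorem prp_worst_case_search_direction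
    (n : ℕ) (μ L : ℝ) (hμ : 0 < μ) (hμL : μ < L)
    (q : ℝ) (hq : q = μ / L)
    (f : EuclideanSpace ℝ (Fin n) → ℝ)
    (hdiff : Differentiable ℝ f)
    (hsmooth : ∀ a b, ‖gradient f a - gradient f b‖ ≤ L * ‖a - b‖)
    (hsc : ∀ a b, f a ≥ f b + ⟪gradient f b, a - b⟫_ℝ + μ / 2 * ‖a - b‖ ^ 2)
    (xkm dkm : EuclideanSpace ℝ (Fin n))
    (hgkm : gradient f xkm ≠ 0)
    (hdir : ⟪gradient f xkm, dkm⟫_ℝ = ‖gradient f xkm‖ ^ 2)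
    (γkm : ℝ) (hls : ∀ t : ℝ, f (xkm - γkm • dkm) ≤ f (xkm - t • dkm))
    (xk : EuclideanSpace ℝ (Fin n)) (hxk : xk = xkm - γkm • dkm)
    (βkm : ℝ)
    (hβ : βkm = (‖gradient f xk‖ ^ 2 - ⟪gradient f xk, gradient f xkm⟫_ℝ)
        / ‖gradient f xkm‖ ^ 2)
    (dk : EuclideanSpace ℝ (Fin n)) (hdk : dk = gradient f xk + βkm • dkm) :
    ‖dk‖ ^ 2 ≤ (1 + q) ^ 2 / (4 * q) * ‖gradient f xk‖ ^ 2 := by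
  have hL : 0 < L := lt_trans hμ hμL
  have hq0 : 0 < q := by rw [hq]; positivity
  set g0 := gradient f xkm with hg0def
  set g1 := gradient f xk with hg1def
  set G := ‖g0‖ ^ 2 with hGdef
  set D := ‖dkm‖ ^ 2 with hDdef
  clear_value g0 g1 G D
  have hGpos : 0 < G := by
    rw [hGdef]
    have : ‖g0‖ ≠ 0 := norm_ne_zero_iff.mpr hgkm
    positivity
  -- orthogonality from exact line search
  have horth : ⟪g1, dkm⟫_ℝ = 0 := by
    have hrw : ∀ t : ℝ, xkm - t • dkm = xkm + t • (-dkm) := by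
      intro t; rw [smul_neg]; abel
    have hmin : IsLocalMin (fun t : ℝ => f (xkm + t • (-dkm))) γkm := by
      apply Filter.Eventually.of_forall
      intro t
      show f (xkm + γkm • (-dkm)) ≤ f (xkm + t • (-dkm))
      rw [← hrw γkm, ← hrw t]
      exact hls t
    have hd := prp_lineHasDerivAt f hdiff xkm (-dkm) γkm
    have h0 := hmin.hasDerivAt_eq_zero hd
    rw [← hrw γkm, ← hxk] at h0
    rw [inner_neg_right] at h0
    rw [hg1def]
    linarith [h0]
  -- case γ = 0
  rcases eq_or_ne γkm 0 with hγ0 | hγ0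
  · have hxkeq : xk = xkm := by rw [hxk, hγ0, zero_smul, sub_zero]
    have hg1eq : g1 = g0 := by rw [hg1def, hg0def, hxkeq]
    have hβ0 : βkm = 0 := by
      rw [hβ, hg1eq, real_inner_self_eq_norm_sq, sub_self, zero_div]
    have hdkeq : dk = g1 := by rw [hdk, hβ0, zero_smul, add_zero]
    rw [hdkeq]
    have h1 : 1 ≤ (1 + q) ^ 2 / (4 * q) := by
      rw [le_div_iff₀ (by positivity)]
      nlinarith only [sq_nonneg (1 - q)]
    nlinarith only [sq_nonneg ‖g1‖, h1]
  -- case γ ≠ 0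
  · have hdkm0 : dkm ≠ 0 := by
      intro h
      rw [h, inner_zero_right] at hdir
      exact hGpos.ne' hdir.symm
    have hDpos : 0 < D := by
      rw [hDdef]
      have : ‖dkm‖ ≠ 0 := norm_ne_zero_iff.mpr hdkm0
      positivity
    have hΔx : xk - xkm = -(γkm • dkm) := by rw [hxk]; abel
    have hs : ⟪g1 - g0, xk - xkm⟫_ℝ = γkm * G := by
      rw [hΔx, inner_neg_right, real_inner_smul_right, inner_sub_left, horth, hdir]
      ring
    have hN : ‖xk - xkm‖ ^ 2 = γkm ^ 2 * D := by
      rw [hΔx, norm_neg, norm_smul, mul_pow, Real.norm_eq_abs, sq_abs, hDdef]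
    have hg1Δx : ⟪g1, xk - xkm⟫_ℝ = 0 := by
      rw [hΔx, inner_neg_right, real_inner_smul_right, horth, mul_zero, neg_zero]
    -- interpolation inequality
    have hinterp := prp_interp_lemma f μ L hμ hμL
      (prp_descent_lemma f L hdiff hsmooth) hsc xk xkm
    rw [← hg1def, ← hg0def, hs, hN] at hinterp
    have hγsq : 0 < γkm ^ 2 := lt_of_le_of_ne (sq_nonneg γkm) (Ne.symm (pow_ne_zero 2 hγ0))
    have hμLN : 0 < μ * L * (γkm ^ 2 * D) := by positivity
    have hLμpos : 0 < L + μ := by linarith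
    have hspos : 0 < γkm * G := by
      nlinarith only [hinterp, sq_nonneg ‖g1 - g0‖, hμLN, hLμpos]
    set s := γkm * G with hsdef
    set N := γkm ^ 2 * D with hNdef
    have hNpos : 0 < N := by
      rw [hNdef]
      exact mul_pos hγsq hDpos
    set A := ‖g1 - g0‖ ^ 2 with hAdef
    set g := ‖g1‖ ^ 2 with hgdef
    have hgnn : 0 ≤ g := by rw [hgdef]; positivity
    set c1 := ⟪g1, g1 - g0⟫_ℝ with hc1def
    clear_value s N A g c1
    -- Cauchy-Schwarz with w = N • (g1 - g0) - s • (xk - xkm)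
    have hCS : (N * c1) ^ 2 ≤ g * (N ^ 2 * A - N * s ^ 2) := by
      set w := N • (g1 - g0) - s • (xk - xkm) with hwdef
      have h := real_inner_mul_inner_self_le g1 w
      have e1 : ⟪g1, w⟫_ℝ = N * c1 := by
        rw [hwdef, inner_sub_right, real_inner_smul_right, real_inner_smul_right, hg1Δx,
          ← hc1def]
        ring
      have e2 : ⟪w, w⟫_ℝ = N ^ 2 * A - N * s ^ 2 := by
        rw [real_inner_self_eq_norm_sq, hwdef, norm_sub_sq_real, real_inner_smul_left,
          real_inner_smul_right, hs, norm_smul, norm_smul, mul_pow, mul_pow,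
          Real.norm_eq_abs, Real.norm_eq_abs, sq_abs, sq_abs, hN, ← hAdef]
        ring
      rw [e1, e2, real_inner_self_eq_norm_sq, ← hgdef] at h
      rw [pow_two]
      exact h
    have st1 : N * c1 ^ 2 ≤ g * (N * A - s ^ 2) := by
      have h : N * (N * c1 ^ 2) ≤ N * (g * (N * A - s ^ 2)) := by
        calc N * (N * c1 ^ 2) = (N * c1) ^ 2 := by ring
          _ ≤ g * (N ^ 2 * A - N * s ^ 2) := hCS
          _ = N * (g * (N * A - s ^ 2)) := by ring
      exact le_of_mul_le_mul_left h hNpos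
    have st2 : A ≤ (L + μ) * s - μ * L * N := by linarith [hinterp]
    have st3 : N * c1 ^ 2 ≤ g * (N * ((L + μ) * s - μ * L * N) - s ^ 2) := by
      have h1 : N * A - s ^ 2 ≤ N * ((L + μ) * s - μ * L * N) - s ^ 2 := by
        have := mul_le_mul_of_nonneg_left st2 hNpos.le
        linarith
      exact st1.trans (mul_le_mul_of_nonneg_left h1 hgnn)
    have st4 : 4 * (μ * L) * (N * ((L + μ) * s - μ * L * N) - s ^ 2) ≤ (L - μ) ^ 2 * s ^ 2 := by
      nlinarith only [sq_nonneg (2 * (μ * L) * N - (L + μ) * s)]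
    have st5 : 4 * (μ * L) * (N * c1 ^ 2) ≤ g * ((L - μ) ^ 2 * s ^ 2) := by
      calc 4 * (μ * L) * (N * c1 ^ 2)
          ≤ 4 * (μ * L) * (g * (N * ((L + μ) * s - μ * L * N) - s ^ 2)) :=
            mul_le_mul_of_nonneg_left st3 (by positivity)
        _ = g * (4 * (μ * L) * (N * ((L + μ) * s - μ * L * N) - s ^ 2)) := by ring
        _ ≤ g * ((L - μ) ^ 2 * s ^ 2) := mul_le_mul_of_nonneg_left st4 hgnn
    -- translate to βkm
    have hG0 : G ≠ 0 := hGpos.ne'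
    have hc1β : c1 = βkm * G := by
      have e : g - ⟪g1, g0⟫_ℝ = c1 := by
        rw [hc1def, inner_sub_right, real_inner_self_eq_norm_sq, ← hgdef]
      rw [hβ, e]
      field_simp
    have st6 : βkm ^ 2 * D * (4 * (μ * L)) ≤ g * (L - μ) ^ 2 := by
      have h : (βkm ^ 2 * D * (4 * (μ * L))) * (γkm ^ 2 * G ^ 2)
          ≤ (g * (L - μ) ^ 2) * (γkm ^ 2 * G ^ 2) := by
        have e : 4 * (μ * L) * (N * c1 ^ 2) = (βkm ^ 2 * D * (4 * (μ * L))) * (γkm ^ 2 * G ^ 2) := by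
          rw [hc1β, hNdef]; ring
        have e2 : g * ((L - μ) ^ 2 * s ^ 2) = (g * (L - μ) ^ 2) * (γkm ^ 2 * G ^ 2) := by
          rw [hsdef]; ring
        rw [← e, ← e2]; exact st5
      have hpos : 0 < γkm ^ 2 * G ^ 2 := mul_pos hγsq (pow_pos hGpos 2)
      exact le_of_mul_le_mul_right h hpos
    -- norm of dk
    have hdknorm : ‖dk‖ ^ 2 = g + βkm ^ 2 * D := by
      rw [hdk, norm_add_sq_real, real_inner_smul_right, horth, norm_smul, mul_pow,
        Real.norm_eq_abs, sq_abs, ← hgdef, ← hDdef]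
      ring
    rw [hdknorm]
    have hc : (1 + q) ^ 2 / (4 * q) = (L + μ) ^ 2 / (4 * (μ * L)) := by
      rw [hq]
      field_simp
    rw [hc, div_mul_eq_mul_div, le_div_iff₀ (by positivity : (0:ℝ) < 4 * (μ * L))]
    nlinarith only [st6, hgnn]
end

section
/- Let 0 < μ < L < ∞ and q = μ/L. Let f : ℝ^n → ℝ be L-smooth and μ-strongly convex. Let c_{k−1} > 1, and let x_{k−1}, d_{k−1} ∈ ℝ^n with ∇f(x_{k−1}) ≠ 0, ⟨∇f(x_{k−1}), d_{k−1}⟩ = ‖∇f(x_{k−1})‖², and ‖d_{k−1}‖² = c_{k−1}‖∇f(x_{k−1})‖². Let γ_{k−1} ∈ ℝ minimize γ ↦ f(x_{k−1} − γ d_{k−1}) over ℝ, set x_k = x_{k−1} − γ_{k−1} d_{k−1}, and let β_{k−1} = ‖∇f(x_k)‖²/‖∇f(x_{k−1})‖² (the Fletcher–Reeves update). Then 0 ≤ β_{k−1} ≤ (1/c_{k−1}) · (1 − q + 2√((c_{k−1} − 1)q))² / (4q). -/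
set_option maxHeartbeats 1000000

open scoped InnerProductSpace

section Aux

lemma aux_descent {E : Type*} [NormedAddCommGroup E] [InnerProductSpace ℝ E] [CompleteSpace E]
    (f : E → ℝ) (hdiff : Differentiable ℝ f) (L : ℝ)
    (hsmooth : ∀ a b, ‖gradient f a - gradient f b‖ ≤ L * ‖a - b‖) (a b : E) :
    f b ≤ f a + ⟪gradient f a, b - a⟫_ℝ + L / 2 * ‖b - a‖ ^ 2 := by
  set v := b - a with hv
  have hline : ∀ t : ℝ, HasDerivAt (fun t : ℝ => f (a + t • v))
      ⟪gradient f (a + t • v), v⟫_ℝ t := by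
    intro t
    have h1 : HasDerivAt (fun t : ℝ => a + t • v) v t := by
      simpa using ((hasDerivAt_id t).smul_const v).const_add a
    have h2 : HasFDerivAt f (InnerProductSpace.toDual ℝ E (gradient f (a + t • v))) (a + t • v) :=
      (hdiff (a + t • v)).hasGradientAt
    simpa [InnerProductSpace.toDual_apply_apply, Function.comp_def] using h2.comp_hasDerivAt t h1
  set ψ : ℝ → ℝ := fun t => f (a + t • v) - t * ⟪gradient f a, v⟫_ℝ - L / 2 * t ^ 2 * ‖v‖ ^ 2
    with hψ
  have hψd : ∀ t : ℝ, HasDerivAt ψ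
      (⟪gradient f (a + t • v), v⟫_ℝ - ⟪gradient f a, v⟫_ℝ - L / 2 * (2 * t) * ‖v‖ ^ 2) t := by
    intro t
    have hpoly : HasDerivAt (fun t : ℝ => L / 2 * t ^ 2 * ‖v‖ ^ 2)
        (L / 2 * (2 * t) * ‖v‖ ^ 2) t := by
      have := ((hasDerivAt_pow 2 t).const_mul (L / 2)).mul_const (‖v‖ ^ 2)
      simpa [pow_one] using this
    exact ((hline t).sub (hasDerivAt_mul_const _)).sub hpoly
  have hcont : Continuous ψ := by
    refine Continuous.sub (Continuous.sub ?_ (by continuity)) (by continuity)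
    exact hdiff.continuous.comp (by continuity)
  have hanti : AntitoneOn ψ (Set.Icc 0 1) := by
    apply antitoneOn_of_deriv_nonpos (convex_Icc 0 1) hcont.continuousOn
      (fun t _ => (hψd t).differentiableAt.differentiableWithinAt)
    intro t ht
    rw [interior_Icc] at ht
    rw [(hψd t).deriv]
    have hcs : ⟪gradient f (a + t • v) - gradient f a, v⟫_ℝ ≤
        ‖gradient f (a + t • v) - gradient f a‖ * ‖v‖ := real_inner_le_norm _ _
    have hlip : ‖gradient f (a + t • v) - gradient f a‖ ≤ L * (t * ‖v‖) := by
      have := hsmooth (a + t • v) a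
      simpa [norm_smul, abs_of_pos ht.1, mul_assoc] using this
    have hvn : (0:ℝ) ≤ ‖v‖ := norm_nonneg _
    have h := hcs.trans (mul_le_mul_of_nonneg_right hlip hvn)
    rw [inner_sub_left] at h
    nlinarith [h]
  have h01 := hanti (Set.mem_Icc.2 ⟨le_refl 0, zero_le_one⟩)
    (Set.mem_Icc.2 ⟨zero_le_one, le_refl 1⟩) zero_le_one
  have e0 : ψ 0 = f a := by simp [hψ]
  have e1 : ψ 1 = f b - ⟪gradient f a, v⟫_ℝ - L / 2 * ‖v‖ ^ 2 := by
    simp [hψ, hv]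
  rw [e0, e1] at h01
  linarith

lemma aux_coco {E : Type*} [NormedAddCommGroup E] [InnerProductSpace ℝ E]
    (F : E → ℝ) (G : E → E) (M : ℝ) (hM : 0 < M)
    (UB : ∀ a b, F b ≤ F a + ⟪G a, b - a⟫_ℝ + M / 2 * ‖b - a‖ ^ 2)
    (CV : ∀ a b, F b + ⟪G b, a - b⟫_ℝ ≤ F a) (a b : E) :
    1 / M * ‖G a - G b‖ ^ 2 ≤ ⟪G a - G b, a - b⟫_ℝ := by
  have key : ∀ x y : E, F x + ⟪G x, y - x⟫_ℝ + 1 / M * ‖G y - G x‖ ^ 2 / 2 ≤ F y := by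
    intro x y
    set w := G y - G x with hw
    set z := y - (1 / M) • w with hz
    have h1 := UB y z
    have h2 := CV z x
    have e1 : z - y = -((1 / M) • w) := by rw [hz]; abel
    have e2 : z - x = (y - x) - (1 / M) • w := by rw [hz]; abel
    rw [e1, inner_neg_right, real_inner_smul_right, norm_neg, norm_smul] at h1
    rw [e2, inner_sub_right, real_inner_smul_right] at h2
    have e3 : ⟪G y, w⟫_ℝ - ⟪G x, w⟫_ℝ = ‖w‖ ^ 2 := by
      rw [← inner_sub_left, ← hw, real_inner_self_eq_norm_sq]
    have e4 : (‖(1:ℝ) / M‖ * ‖w‖) ^ 2 = (1 / M) ^ 2 * ‖w‖ ^ 2 := by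
      rw [mul_pow, Real.norm_eq_abs, sq_abs]
    rw [e4] at h1
    have hM' : M ≠ 0 := ne_of_gt hM
    have hMexp : M / 2 * ((1 / M) ^ 2 * ‖w‖ ^ 2) = 1 / M * ‖w‖ ^ 2 / 2 := by
      field_simp
    have e3' : 1 / M * ⟪G y, w⟫_ℝ - 1 / M * ⟪G x, w⟫_ℝ = 1 / M * ‖w‖ ^ 2 := by
      rw [← mul_sub, e3]
    linarith [h1, h2, e3', hMexp]
  have k1 := key a b
  have k2 := key b a
  have e5 : ‖G b - G a‖ = ‖G a - G b‖ := norm_sub_rev _ _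
  have e6 : ⟪G b, a - b⟫_ℝ = -⟪G b, b - a⟫_ℝ := by
    rw [← inner_neg_right]; congr 1; abel
  have e7 : ⟪G a - G b, a - b⟫_ℝ = ⟪G a, a - b⟫_ℝ - ⟪G b, a - b⟫_ℝ := inner_sub_left _ _ _
  have e8 : ⟪G a, b - a⟫_ℝ = -⟪G a, a - b⟫_ℝ := by
    rw [← inner_neg_right]; congr 1; abel
  rw [e5] at k1
  rw [e7]
  rw [e8] at k1
  linarith [k1, k2]

end Aux

/-- Bound on the Fletcher–Reeves update parameter: if the previous search
direction has quality ratio `‖d_{k−1}‖² = c_{k−1}‖∇f(x_{k−1})‖²` with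
`c_{k−1} > 1`, then after one exact line search step the FR update parameter
`β_{k−1} = ‖∇f(x_k)‖²/‖∇f(x_{k−1})‖²` satisfies
`0 ≤ β_{k−1} ≤ (1/c_{k−1})·(1 − q + 2√((c_{k−1} − 1)q))²/(4q)`, where `q = μ/L`. -/
theorem fr_beta_bound
    (n : ℕ) (μ L : ℝ) (hμ : 0 < μ) (hμL : μ < L)
    (q : ℝ) (hq : q = μ / L)
    (f : EuclideanSpace ℝ (Fin n) → ℝ)
    (hdiff : Differentiable ℝ f)
    (hsmooth : ∀ a b, ‖gradient f a - gradient f b‖ ≤ L * ‖a - b‖)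
    (hsc : ∀ a b, f a ≥ f b + ⟪gradient f b, a - b⟫_ℝ + μ / 2 * ‖a - b‖ ^ 2)
    (ckm : ℝ) (hckm : 1 < ckm)
    (xkm dkm : EuclideanSpace ℝ (Fin n))
    (hgkm : gradient f xkm ≠ 0)
    (hdir : ⟪gradient f xkm, dkm⟫_ℝ = ‖gradient f xkm‖ ^ 2)
    (hratio : ‖dkm‖ ^ 2 = ckm * ‖gradient f xkm‖ ^ 2)
    (γkm : ℝ) (hls : ∀ t : ℝ, f (xkm - γkm • dkm) ≤ f (xkm - t • dkm))
    (xk : EuclideanSpace ℝ (Fin n)) (hxk : xk = xkm - γkm • dkm)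
    (βkm : ℝ) (hβ : βkm = ‖gradient f xk‖ ^ 2 / ‖gradient f xkm‖ ^ 2) :
    0 ≤ βkm ∧
      βkm ≤ 1 / ckm * (1 - q + 2 * Real.sqrt ((ckm - 1) * q)) ^ 2 / (4 * q) := by
  have hL0 : 0 < L := lt_trans hμ hμL
  have hq0 : 0 < q := by rw [hq]; positivity
  have hq1 : q < 1 := by rw [hq]; exact (div_lt_one hL0).2 hμL
  have hck0 : (0:ℝ) < ckm := by linarith
  set g := gradient f xkm with hg
  set gp := gradient f xk with hgp
  have hGpos : 0 < ‖g‖ ^ 2 := by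
    have : 0 < ‖g‖ := norm_pos_iff.mpr hgkm
    positivity
  have hDpos : 0 < ‖dkm‖ ^ 2 := by rw [hratio]; exact mul_pos hck0 hGpos
  have descent := aux_descent f hdiff L hsmooth
  -- orthogonality from exact line search
  have horth : ⟪gp, dkm⟫_ℝ = 0 := by
    have key : ∀ τ : ℝ, 0 ≤ -(τ * ⟪gp, dkm⟫_ℝ) + L / 2 * (τ ^ 2 * ‖dkm‖ ^ 2) := by
      intro τ
      have h1 : f xk ≤ f (xk - τ • dkm) := by
        rw [hxk, show xkm - γkm • dkm - τ • dkm = xkm - (γkm + τ) • dkm by module]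
        exact hls (γkm + τ)
      have h2 := descent xk (xk - τ • dkm)
      rw [show xk - τ • dkm - xk = -(τ • dkm) by abel] at h2
      rw [inner_neg_right, real_inner_smul_right, norm_neg, norm_smul,
        show (‖τ‖ * ‖dkm‖) ^ 2 = τ ^ 2 * ‖dkm‖ ^ 2 by
          rw [mul_pow, Real.norm_eq_abs, sq_abs]] at h2
      linarith [h1, h2]
    have hτ := key (⟪gp, dkm⟫_ℝ / (L * ‖dkm‖ ^ 2))
    set P := ⟪gp, dkm⟫_ℝ with hP
    have hLD : 0 < L * ‖dkm‖ ^ 2 := mul_pos hL0 hDpos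
    have expand : -(P / (L * ‖dkm‖ ^ 2) * P) +
        L / 2 * ((P / (L * ‖dkm‖ ^ 2)) ^ 2 * ‖dkm‖ ^ 2)
        = -(P ^ 2 / (L * ‖dkm‖ ^ 2)) / 2 := by
      field_simp
      ring
    rw [expand] at hτ
    have hP2 : P ^ 2 ≤ 0 := by
      by_contra hcon
      push_neg at hcon
      have := div_pos hcon hLD
      linarith
    have : P ^ 2 = 0 := le_antisymm hP2 (sq_nonneg P)
    exact pow_eq_zero_iff two_ne_zero |>.mp this
  -- interpolation inequality via co-coercivity of f - μ/2‖·‖²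
  have UB : ∀ a b : EuclideanSpace ℝ (Fin n),
      (fun x => f x - μ / 2 * ‖x‖ ^ 2) b ≤ (fun x => f x - μ / 2 * ‖x‖ ^ 2) a +
        ⟪(fun x => gradient f x - μ • x) a, b - a⟫_ℝ + (L - μ) / 2 * ‖b - a‖ ^ 2 := by
    intro a b
    simp only
    have hd := descent a b
    have hib : ‖b‖ ^ 2 = ‖a‖ ^ 2 + 2 * ⟪a, b - a⟫_ℝ + ‖b - a‖ ^ 2 := by
      have := norm_add_sq_real a (b - a)
      rw [show a + (b - a) = b by abel] at this
      linarith [this]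
    have hib' : μ * ‖b‖ ^ 2 = μ * ‖a‖ ^ 2 + μ * (2 * ⟪a, b - a⟫_ℝ) + μ * ‖b - a‖ ^ 2 := by
      rw [hib]; ring
    rw [inner_sub_left, real_inner_smul_left]
    linarith [hd, hib']
  have CV : ∀ a b : EuclideanSpace ℝ (Fin n),
      (fun x => f x - μ / 2 * ‖x‖ ^ 2) b +
        ⟪(fun x => gradient f x - μ • x) b, a - b⟫_ℝ ≤
        (fun x => f x - μ / 2 * ‖x‖ ^ 2) a := by
    intro a b
    simp only
    have hs := hsc a b
    have hib : ‖a‖ ^ 2 = ‖b‖ ^ 2 + 2 * ⟪b, a - b⟫_ℝ + ‖a - b‖ ^ 2 := by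
      have := norm_add_sq_real b (a - b)
      rw [show b + (a - b) = a by abel] at this
      linarith [this]
    have hib' : μ * ‖a‖ ^ 2 = μ * ‖b‖ ^ 2 + μ * (2 * ⟪b, a - b⟫_ℝ) + μ * ‖a - b‖ ^ 2 := by
      rw [hib]; ring
    rw [inner_sub_left, real_inner_smul_left]
    linarith [hs, hib']
  have interp := aux_coco (fun x => f x - μ / 2 * ‖x‖ ^ 2)
    (fun x => gradient f x - μ • x) (L - μ) (by linarith) UB CV xkm xk
  set u : EuclideanSpace ℝ (Fin n) := g - gp - (μ * γkm) • dkm with hu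
  have hvec1 : g - μ • xkm - (gp - μ • xk) = u := by rw [hu, hxk]; module
  have hvec2 : xkm - xk = γkm • dkm := by rw [hxk]; abel
  rw [hvec1, hvec2] at interp
  -- key ball inequality
  have hK : ‖g - gp - ((μ + L) / 2 * γkm) • dkm‖ ^ 2 ≤
      ((L - μ) / 2) ^ 2 * (γkm ^ 2 * ‖dkm‖ ^ 2) := by
    have hw : g - gp - ((μ + L) / 2 * γkm) • dkm = u - ((L - μ) / 2 * γkm) • dkm := by
      rw [hu]; module
    rw [hw]
    have hexp : ‖u - ((L - μ) / 2 * γkm) • dkm‖ ^ 2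
        = ‖u‖ ^ 2 - 2 * ((L - μ) / 2 * γkm * ⟪u, dkm⟫_ℝ) +
          ((L - μ) / 2 * γkm) ^ 2 * ‖dkm‖ ^ 2 := by
      rw [norm_sub_sq_real, real_inner_smul_right, norm_smul, mul_pow, Real.norm_eq_abs, sq_abs]
    rw [hexp]
    have hLμ : (0:ℝ) < L - μ := by linarith
    rw [real_inner_smul_right] at interp
    have h3 : ‖u‖ ^ 2 ≤ (L - μ) * (γkm * ⟪u, dkm⟫_ℝ) := by
      have h4 := mul_le_mul_of_nonneg_left interp hLμ.le
      have h5 : (L - μ) * (1 / (L - μ) * ‖u‖ ^ 2) = ‖u‖ ^ 2 := by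
        field_simp
      linarith [h4, h5.symm.le]
    nlinarith [h3]
  -- orthogonal decomposition
  set gperp : EuclideanSpace ℝ (Fin n) := g - (1 / ckm) • dkm with hgperpdef
  set wperp : EuclideanSpace ℝ (Fin n) := gperp - gp with hwperpdef
  have hipd : ⟪gperp, dkm⟫_ℝ = 0 := by
    rw [hgperpdef, inner_sub_left, real_inner_smul_left, hdir, real_inner_self_eq_norm_sq,
      hratio]
    field_simp
    ring
  have hwd : ⟪wperp, dkm⟫_ℝ = 0 := by
    rw [hwperpdef, inner_sub_left, hipd, horth, sub_zero]
  have hdecomp : g - gp - ((μ + L) / 2 * γkm) • dkm =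
      wperp + (1 / ckm - (μ + L) / 2 * γkm) • dkm := by
    rw [hwperpdef, hgperpdef]; module
  have hpyth : ‖g - gp - ((μ + L) / 2 * γkm) • dkm‖ ^ 2
      = ‖wperp‖ ^ 2 + (1 / ckm - (μ + L) / 2 * γkm) ^ 2 * ‖dkm‖ ^ 2 := by
    rw [hdecomp, norm_add_sq_real, real_inner_smul_right, hwd, norm_smul, mul_pow,
      Real.norm_eq_abs, sq_abs]
    ring
  -- scalar bound on ‖wperp‖²
  have hwb : ‖wperp‖ ^ 2 ≤ ‖g‖ ^ 2 * (1 - q) ^ 2 / (4 * q * ckm) := by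
    have h1 : ‖wperp‖ ^ 2 ≤ ((L - μ) / 2) ^ 2 * (γkm ^ 2 * ‖dkm‖ ^ 2) -
        (1 / ckm - (μ + L) / 2 * γkm) ^ 2 * ‖dkm‖ ^ 2 := by
      rw [hpyth] at hK; linarith
    have h2 : ((L - μ) / 2) ^ 2 * (γkm ^ 2 * ‖dkm‖ ^ 2) -
        (1 / ckm - (μ + L) / 2 * γkm) ^ 2 * ‖dkm‖ ^ 2
        ≤ ‖g‖ ^ 2 * (1 - q) ^ 2 / (4 * q * ckm) := by
      rw [hratio, hq]
      have hE1 : ((L - μ) / 2) ^ 2 * (γkm ^ 2 * (ckm * ‖g‖ ^ 2)) -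
          (1 / ckm - (μ + L) / 2 * γkm) ^ 2 * (ckm * ‖g‖ ^ 2)
          = (((L - μ) / 2) ^ 2 * (γkm * ckm) ^ 2 * ‖g‖ ^ 2 -
             (1 - (μ + L) / 2 * (γkm * ckm)) ^ 2 * ‖g‖ ^ 2) / ckm := by
        field_simp
      have hE2 : ‖g‖ ^ 2 * (1 - μ / L) ^ 2 / (4 * (μ / L) * ckm)
          = (‖g‖ ^ 2 * (L - μ) ^ 2 / (4 * μ * L)) / ckm := by
        field_simp
      rw [hE1, hE2]
      gcongr ?_ / ckm
      rw [le_div_iff₀ (by positivity : (0:ℝ) < 4 * μ * L)]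
      nlinarith [mul_nonneg hGpos.le (sq_nonneg (μ + L - 2 * (μ * L) * (γkm * ckm)))]
    linarith [h1, h2]
  -- norm of gperp
  have hgperpn : ‖gperp‖ ^ 2 = ‖g‖ ^ 2 * (ckm - 1) / ckm := by
    rw [hgperpdef, norm_sub_sq_real, real_inner_smul_right, hdir, norm_smul, mul_pow,
      Real.norm_eq_abs, sq_abs, hratio]
    field_simp
    ring
  have hgpexp : gp = gperp - wperp := by rw [hwperpdef]; abel
  have htri : ‖gp‖ ≤ ‖gperp‖ + ‖wperp‖ := by rw [hgpexp]; exact norm_sub_le _ _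
  set S1 := Real.sqrt (‖g‖ ^ 2 * (ckm - 1) / ckm) with hS1
  set S2 := Real.sqrt (‖g‖ ^ 2 * (1 - q) ^ 2 / (4 * q * ckm)) with hS2
  have hcm1 : (0:ℝ) ≤ ckm - 1 := by linarith
  have h1q : (0:ℝ) ≤ 1 - q := by linarith
  have hg1 : ‖gperp‖ = S1 := by rw [hS1, ← hgperpn, Real.sqrt_sq (norm_nonneg _)]
  have hg2 : ‖wperp‖ ≤ S2 := by
    rw [← Real.sqrt_sq (norm_nonneg wperp)]
    exact Real.sqrt_le_sqrt hwb
  have hgpS : ‖gp‖ ≤ S1 + S2 := by rw [hg1] at htri; linarith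
  have hN : ‖gp‖ ^ 2 ≤ (S1 + S2) ^ 2 := pow_le_pow_left₀ (norm_nonneg gp) hgpS 2
  -- sqrt algebra
  set sg := Real.sqrt (‖g‖ ^ 2) with hsg
  set sq' := Real.sqrt q with hsq'
  set sc := Real.sqrt ckm with hsc
  set sm := Real.sqrt (ckm - 1) with hsm
  have esg : ‖g‖ ^ 2 = sg ^ 2 := by rw [hsg, Real.sq_sqrt hGpos.le]
  have eq' : q = sq' ^ 2 := by rw [hsq', Real.sq_sqrt hq0.le]
  have ec : ckm = sc ^ 2 := by rw [hsc, Real.sq_sqrt hck0.le]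
  have em : ckm - 1 = sm ^ 2 := by rw [hsm, Real.sq_sqrt hcm1]
  have hsq'0 : 0 < sq' := Real.sqrt_pos.2 hq0
  have hsc0 : 0 < sc := Real.sqrt_pos.2 hck0
  have hsg0 : 0 ≤ sg := Real.sqrt_nonneg _
  have hsplit : Real.sqrt ((ckm - 1) * q) = sm * sq' := by
    rw [hsm, hsq', ← Real.sqrt_mul hcm1]
  have e1 : S1 = sg * sm / sc := by
    rw [hS1]
    rw [show ‖g‖ ^ 2 * (ckm - 1) / ckm = (sg * sm / sc) ^ 2 by
      rw [div_pow, mul_pow, ← esg, ← em, ← ec]]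
    exact Real.sqrt_sq (by positivity)
  have e2 : S2 = sg * (1 - q) / (2 * sq' * sc) := by
    rw [hS2]
    rw [show ‖g‖ ^ 2 * (1 - q) ^ 2 / (4 * q * ckm) = (sg * (1 - q) / (2 * sq' * sc)) ^ 2 by
      rw [div_pow, mul_pow, mul_pow, mul_pow, ← esg, ← eq', ← ec]; ring]
    exact Real.sqrt_sq (by positivity)
  have hfin : (S1 + S2) ^ 2 =
      ‖g‖ ^ 2 * (1 / ckm * (1 - q + 2 * Real.sqrt ((ckm - 1) * q)) ^ 2 / (4 * q)) := by
    rw [e1, e2, hsplit, esg, eq', ec]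
    field_simp
    ring
  constructor
  · rw [hβ]; positivity
  · rw [hβ, div_le_iff₀ hGpos]
    calc ‖gp‖ ^ 2 ≤ (S1 + S2) ^ 2 := hN
    _ = ‖g‖ ^ 2 * (1 / ckm * (1 - q + 2 * Real.sqrt ((ckm - 1) * q)) ^ 2 / (4 * q)) := hfin
    _ = 1 / ckm * (1 - q + 2 * Real.sqrt ((ckm - 1) * q)) ^ 2 / (4 * q) * ‖g‖ ^ 2 := by ring
end

section
/- Let 0 < μ < L < ∞ and q = μ/L. Let f : ℝ^n → ℝ be L-smooth and μ-strongly convex. Let sequences (x_i), (d_i) in ℝ^n and (γ_i), (β_i) in ℝ be generated by the Fletcher–Reeves method with exact line search: d_0 = ∇f(x_0); for each i, γ_i minimizes γ ↦ f(x_i − γ d_i) over ℝ, x_{i+1} = x_i − γ_i d_i, β_i = ‖∇f(x_{i+1})‖²/‖∇f(x_i)‖², and d_{i+1} = ∇f(x_{i+1}) + β_i d_i. Suppose ∇f(x_i) ≠ 0 for all i ≤ k. Then ‖d_k‖² ≤ (1 + k² (1 − q)²/(4q)) ‖∇f(x_k)‖². -/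
open scoped InnerProductSpace


lemma descent_aux {n : ℕ} {L : ℝ} (f : EuclideanSpace ℝ (Fin n) → ℝ)
    (hdiff : Differentiable ℝ f)
    (hsmooth : ∀ a b, ‖gradient f a - gradient f b‖ ≤ L * ‖a - b‖)
    (a b : EuclideanSpace ℝ (Fin n)) :
    f b ≤ f a + ⟪gradient f a, b - a⟫_ℝ + L / 2 * ‖b - a‖ ^ 2 := by
  set v := b - a with hv
  have hline : ∀ t : ℝ, HasDerivAt (fun t : ℝ => a + t • v) v t := fun t => by
    simpa using ((hasDerivAt_id t).smul_const v).const_add a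
  have hf : ∀ t : ℝ, HasDerivAt (fun t : ℝ => f (a + t • v))
      ⟪gradient f (a + t • v), v⟫_ℝ t := by
    intro t
    have hg := (hdiff (a + t • v)).hasGradientAt
    have := hg.hasFDerivAt.comp_hasDerivAt t (hline t)
    simpa [Function.comp_def] using this
  set ψ : ℝ → ℝ := fun t => f (a + t • v) - t * ⟪gradient f a, v⟫_ℝ - t ^ 2 * (L / 2 * ‖v‖ ^ 2)
    with hψ
  have hψd : ∀ t : ℝ, HasDerivAt ψ
      (⟪gradient f (a + t • v), v⟫_ℝ - ⟪gradient f a, v⟫_ℝ - 2 * t * (L / 2 * ‖v‖ ^ 2)) t := by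
    intro t
    have h1 : HasDerivAt (fun t : ℝ => t * ⟪gradient f a, v⟫_ℝ) ⟪gradient f a, v⟫_ℝ t := by
      simpa using (hasDerivAt_id t).mul_const ⟪gradient f a, v⟫_ℝ
    have h2 : HasDerivAt (fun t : ℝ => t ^ 2 * (L / 2 * ‖v‖ ^ 2))
        (2 * t * (L / 2 * ‖v‖ ^ 2)) t := by
      simpa using (hasDerivAt_pow 2 t).mul_const (L / 2 * ‖v‖ ^ 2)
    exact ((hf t).sub h1).sub h2
  have hmono : AntitoneOn ψ (Set.Icc (0:ℝ) 1) := by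
    apply antitoneOn_of_deriv_nonpos (convex_Icc (0:ℝ) 1)
    · exact fun t _ => ((hψd t).continuousAt).continuousWithinAt
    · exact fun t _ => ((hψd t).differentiableAt).differentiableWithinAt
    · intro t ht
      rw [interior_Icc] at ht
      rw [(hψd t).deriv]
      have h3 : ⟪gradient f (a + t • v) - gradient f a, v⟫_ℝ
          ≤ ‖gradient f (a + t • v) - gradient f a‖ * ‖v‖ := real_inner_le_norm _ _
      have h4 : ‖gradient f (a + t • v) - gradient f a‖ ≤ L * ‖(a + t • v) - a‖ :=
        hsmooth _ _
      have h5 : ‖(a + t • v) - a‖ = t * ‖v‖ := by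
        simp [norm_smul, abs_of_nonneg ht.1.le]
      have h6 : (0:ℝ) ≤ ‖v‖ := norm_nonneg _
      rw [inner_sub_left] at h3
      rw [h5] at h4
      nlinarith [mul_le_mul_of_nonneg_right h4 h6]
  have h01 := hmono (Set.mem_Icc.2 ⟨le_refl 0, zero_le_one⟩)
    (Set.mem_Icc.2 ⟨zero_le_one, le_refl 1⟩) zero_le_one
  have hψ0 : ψ 0 = f a := by simp [hψ]
  have hψ1 : ψ 1 = f b - ⟪gradient f a, v⟫_ℝ - L / 2 * ‖v‖ ^ 2 := by
    simp [hψ, hv]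
  rw [hψ0, hψ1] at h01
  linarith



lemma coco_onesided {n : ℕ} {μ L : ℝ} (hμ : 0 < μ) (hμL : μ < L)
    (f : EuclideanSpace ℝ (Fin n) → ℝ)
    (hdiff : Differentiable ℝ f)
    (hsmooth : ∀ a b, ‖gradient f a - gradient f b‖ ≤ L * ‖a - b‖)
    (hsc : ∀ a b, f a ≥ f b + ⟪gradient f b, a - b⟫_ℝ + μ / 2 * ‖a - b‖ ^ 2)
    (a b : EuclideanSpace ℝ (Fin n)) :
    f a ≥ f b + ⟪gradient f b, a - b⟫_ℝ + μ / 2 * ‖a - b‖ ^ 2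
      + ‖gradient f a - gradient f b - μ • (a - b)‖ ^ 2 / (2 * (L - μ)) := by
  set G := gradient f a with hG
  set H := gradient f b with hH
  set s : EuclideanSpace ℝ (Fin n) := a - b with hs
  set v : EuclideanSpace ℝ (Fin n) := G - H - μ • s with hvdef
  set k : ℝ := (L - μ)⁻¹ with hk
  have hL' : (0:ℝ) < L - μ := by linarith
  have hk0 : k * (L - μ) = 1 := inv_mul_cancel₀ (ne_of_gt hL')
  set c : EuclideanSpace ℝ (Fin n) := a - k • v with hc
  have h1 := hsc c b
  have h2 := descent_aux f hdiff hsmooth a c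
  -- expand
  have e1 : c - b = s - k • v := by rw [hc, hs]; abel
  have e2 : c - a = -(k • v) := by rw [hc]; abel
  have e3 : ‖c - b‖ ^ 2 = ‖s‖ ^ 2 - 2 * (k * ⟪s, v⟫_ℝ) + k ^ 2 * ‖v‖ ^ 2 := by
    rw [e1, ← real_inner_self_eq_norm_sq, ← real_inner_self_eq_norm_sq,
      ← real_inner_self_eq_norm_sq]
    simp only [inner_sub_left, inner_sub_right, real_inner_smul_left, real_inner_smul_right]
    rw [real_inner_comm v s]
    ring
  have e4 : ‖c - a‖ ^ 2 = k ^ 2 * ‖v‖ ^ 2 := by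
    rw [e2, norm_neg, norm_smul, Real.norm_eq_abs, mul_pow, sq_abs]
  have e5 : ⟪H, c - b⟫_ℝ = ⟪H, s⟫_ℝ - k * ⟪H, v⟫_ℝ := by
    rw [e1, inner_sub_right, real_inner_smul_right]
  have e6 : ⟪G, c - a⟫_ℝ = -(k * ⟪G, v⟫_ℝ) := by
    rw [e2, inner_neg_right, real_inner_smul_right]
  have e7 : ⟪G, v⟫_ℝ - ⟪H, v⟫_ℝ - μ * ⟪s, v⟫_ℝ = ‖v‖ ^ 2 := by
    have : ⟪G - H - μ • s, v⟫_ℝ = ⟪G, v⟫_ℝ - ⟪H, v⟫_ℝ - μ * ⟪s, v⟫_ℝ := by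
      simp only [inner_sub_left, real_inner_smul_left, RCLike.conj_to_real,
        conj_trivial]
    rw [← this, ← hvdef, real_inner_self_eq_norm_sq]
  rw [e3, e5] at h1
  rw [e4, e6] at h2
  have key : k * ⟪G, v⟫_ℝ - k * ⟪H, v⟫_ℝ - k * (μ * ⟪s, v⟫_ℝ) = k * ‖v‖ ^ 2 := by
    rw [← e7]; ring
  have hk2N : k ^ 2 * (L - μ) * ‖v‖ ^ 2 = k * ‖v‖ ^ 2 := by
    rw [hk]; field_simp
  have hkN : ‖v‖ ^ 2 / (2 * (L - μ)) = k * ‖v‖ ^ 2 / 2 := by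
    rw [hk]; field_simp
  rw [hkN]
  nlinarith [key, hk2N, h1, h2]

lemma coco_sym {n : ℕ} {μ L : ℝ} (hμ : 0 < μ) (hμL : μ < L)
    (f : EuclideanSpace ℝ (Fin n) → ℝ)
    (hdiff : Differentiable ℝ f)
    (hsmooth : ∀ a b, ‖gradient f a - gradient f b‖ ≤ L * ‖a - b‖)
    (hsc : ∀ a b, f a ≥ f b + ⟪gradient f b, a - b⟫_ℝ + μ / 2 * ‖a - b‖ ^ 2)
    (a b : EuclideanSpace ℝ (Fin n)) :
    ‖gradient f a - gradient f b - μ • (a - b)‖ ^ 2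
      ≤ (L - μ) * (⟪gradient f a - gradient f b, a - b⟫_ℝ - μ * ‖a - b‖ ^ 2) := by
  have hL' : (0:ℝ) < L - μ := by linarith
  have h1 := coco_onesided hμ hμL f hdiff hsmooth hsc a b
  have h2 := coco_onesided hμ hμL f hdiff hsmooth hsc b a
  set G := gradient f a
  set H := gradient f b
  have ev : H - G - μ • (b - a) = -(G - H - μ • (a - b)) := by
    rw [smul_sub, smul_sub]; abel
  rw [ev, norm_neg, norm_sub_rev b a] at h2
  have ei : ⟪G, b - a⟫_ℝ = -⟪G, a - b⟫_ℝ := by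
    rw [← inner_neg_right, neg_sub]
  rw [ei] at h2
  have hsum : ⟪G, a - b⟫_ℝ - ⟪H, a - b⟫_ℝ - μ * ‖a - b‖ ^ 2
      ≥ ‖G - H - μ • (a - b)‖ ^ 2 / (L - μ) := by
    have : ‖G - H - μ • (a - b)‖ ^ 2 / (2 * (L - μ))
        + ‖G - H - μ • (a - b)‖ ^ 2 / (2 * (L - μ))
        = ‖G - H - μ • (a - b)‖ ^ 2 / (L - μ) := by
      field_simp; ring
    linarith
  rw [inner_sub_left]
  rw [ge_iff_le, div_le_iff₀ hL'] at hsum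
  linarith


set_option maxHeartbeats 1000000 in
lemma onestep {n : ℕ} {μ L : ℝ} (hμ : 0 < μ) (hμL : μ < L)
    (p gi dd : EuclideanSpace ℝ (Fin n)) (γ : ℝ) (hgi : gi ≠ 0)
    (hpd : ⟪p, dd⟫_ℝ = 0) (hgd : ⟪gi, dd⟫_ℝ = ‖gi‖ ^ 2)
    (hco : ‖p - gi - μ • (-(γ • dd))‖ ^ 2
      ≤ (L - μ) * (⟪p - gi, -(γ • dd)⟫_ℝ - μ * ‖-(γ • dd)‖ ^ 2)) :
    ‖p‖ * ‖dd‖ ≤ Real.sqrt (‖gi‖ ^ 2 * ‖dd‖ ^ 2 - (‖gi‖ ^ 2) ^ 2)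
      + Real.sqrt ((L - μ) ^ 2 / (4 * μ * L)) * ‖gi‖ ^ 2 := by
  have hL : (0:ℝ) < L := lt_trans hμ hμL
  set U : ℝ := ‖gi‖ ^ 2 with hU
  set E : ℝ := ‖dd‖ ^ 2 with hE
  have hU0 : 0 < U := by
    have := norm_pos_iff.2 hgi
    rw [hU]; positivity
  have hdd : dd ≠ 0 := by
    intro h
    rw [h, inner_zero_right] at hgd
    exact absurd hgd.symm (ne_of_gt hU0)
  have hE0 : 0 < E := by
    have := norm_pos_iff.2 hdd
    positivity
  set c : ℝ := (L - μ) ^ 2 / (4 * μ * L) with hc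
  have hc0 : 0 ≤ c := by rw [hc]; positivity
  have h7 : ∀ W : ℝ, 4 * μ * L * (c * W) = (L - μ) ^ 2 * W := by
    intro W; rw [hc]; field_simp
  clear_value U E c
  set yperp : EuclideanSpace ℝ (Fin n) := p - gi + (U / E) • dd with hyperp
  set gperp : EuclideanSpace ℝ (Fin n) := gi - (U / E) • dd with hgperp
  have hsum : gperp + yperp = p := by rw [hgperp, hyperp]; abel
  -- norm of gperp
  have hgp : ‖gperp‖ ^ 2 = U - U ^ 2 / E := by
    rw [hgperp, norm_sub_sq_real, real_inner_smul_right, hgd, norm_smul,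
      Real.norm_eq_abs, mul_pow, sq_abs, ← hU, ← hE]
    field_simp
    ring
  -- norm of yperp
  have hyp : ‖yperp‖ ^ 2 = ‖p‖ ^ 2 - 2 * ⟪p, gi⟫_ℝ + U - U ^ 2 / E := by
    rw [hyperp, norm_add_sq_real, norm_sub_sq_real, inner_sub_left,
      real_inner_smul_right, real_inner_smul_right, hgd, hpd, norm_smul,
      Real.norm_eq_abs, mul_pow, sq_abs, ← hU, ← hE]
    field_simp
    ring
  -- expand cocoercivity
  have hco2 : ‖p‖ ^ 2 - 2 * ⟪p, gi⟫_ℝ + U - 2 * (μ * γ * U) + μ ^ 2 * γ ^ 2 * E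
      ≤ (L - μ) * (γ * U - μ * (γ ^ 2 * E)) := by
    have el : ‖p - gi - μ • (-(γ • dd))‖ ^ 2
        = ‖p‖ ^ 2 - 2 * ⟪p, gi⟫_ℝ + U - 2 * (μ * γ * U) + μ ^ 2 * γ ^ 2 * E := by
      rw [smul_neg, smul_smul, sub_neg_eq_add, norm_add_sq_real, norm_sub_sq_real,
        inner_sub_left, real_inner_smul_right, real_inner_smul_right, hgd, hpd,
        norm_smul, Real.norm_eq_abs, mul_pow, sq_abs, ← hU, ← hE]
      ring
    have er : ⟪p - gi, -(γ • dd)⟫_ℝ = γ * U := by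
      simp only [inner_neg_right, inner_sub_left, real_inner_smul_right, hgd, hpd, ← hU]
      ring
    have en : ‖-(γ • dd)‖ ^ 2 = γ ^ 2 * E := by
      rw [norm_neg, norm_smul, Real.norm_eq_abs, mul_pow, sq_abs, hE]
    rw [el, er, en] at hco
    linarith
  -- key: ‖yperp‖² * E ≤ c * U²
  have hkey : ‖yperp‖ ^ 2 * E ≤ c * U ^ 2 := by
    have hUE : U ^ 2 / E * E = U ^ 2 := div_mul_cancel₀ _ (ne_of_gt hE0)
    have step1 : ‖yperp‖ ^ 2 * E ≤ (L + μ) * γ * U * E - μ * L * γ ^ 2 * E ^ 2 - U ^ 2 := by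
      rw [hyp]
      nlinarith [mul_le_mul_of_nonneg_right hco2 hE0.le, hUE]
    have h5 : 4 * μ * L * ((L + μ) * γ * U * E - μ * L * γ ^ 2 * E ^ 2 - U ^ 2)
        ≤ (L - μ) ^ 2 * U ^ 2 := by
      nlinarith [sq_nonneg (2 * μ * L * γ * E - (L + μ) * U)]
    have h7' := h7 (U ^ 2)
    have h6 : (L + μ) * γ * U * E - μ * L * γ ^ 2 * E ^ 2 - U ^ 2 ≤ c * U ^ 2 := by
      rw [← h7'] at h5
      exact le_of_mul_le_mul_left h5 (by positivity)
    exact le_trans step1 h6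
  -- convert to sqrt bounds
  have hy_bound : ‖yperp‖ * ‖dd‖ ≤ Real.sqrt c * U := by
    have h1 : ‖yperp‖ * ‖dd‖ = Real.sqrt (‖yperp‖ ^ 2 * E) := by
      rw [hE, ← mul_pow, Real.sqrt_sq (by positivity)]
    rw [h1]
    calc Real.sqrt (‖yperp‖ ^ 2 * E) ≤ Real.sqrt (c * U ^ 2) := Real.sqrt_le_sqrt hkey
      _ = Real.sqrt c * U := by
          rw [Real.sqrt_mul hc0, Real.sqrt_sq hU0.le]
  have hg_bound : ‖gperp‖ * ‖dd‖ = Real.sqrt (U * E - U ^ 2) := by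
    have h1 : ‖gperp‖ * ‖dd‖ = Real.sqrt (‖gperp‖ ^ 2 * E) := by
      rw [hE, ← mul_pow, Real.sqrt_sq (by positivity)]
    rw [h1, hgp]
    congr 1
    field_simp
  have htri : ‖p‖ ≤ ‖gperp‖ + ‖yperp‖ := by
    rw [← hsum]; exact norm_add_le _ _
  have := mul_le_mul_of_nonneg_right htri (norm_nonneg dd)
  rw [add_mul] at this
  calc ‖p‖ * ‖dd‖ ≤ ‖gperp‖ * ‖dd‖ + ‖yperp‖ * ‖dd‖ := this
    _ ≤ Real.sqrt (U * E - U ^ 2) + Real.sqrt c * U := by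
        rw [hg_bound]; exact add_le_add_right hy_bound _


lemma ortho_aux {n : ℕ} (f : EuclideanSpace ℝ (Fin n) → ℝ)
    (hdiff : Differentiable ℝ f) (x0 dd : EuclideanSpace ℝ (Fin n)) (γ0 : ℝ)
    (hls : ∀ t : ℝ, f (x0 - γ0 • dd) ≤ f (x0 - t • dd)) :
    ⟪gradient f (x0 - γ0 • dd), dd⟫_ℝ = 0 := by
  have hline : ∀ t : ℝ, HasDerivAt (fun t : ℝ => x0 - t • dd) (-dd) t := by
    intro t
    have : HasDerivAt (fun t : ℝ => x0 + t • (-dd)) (-dd) t := by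
      simpa using ((hasDerivAt_id t).smul_const (-dd)).const_add x0
    simpa [smul_neg, sub_eq_add_neg] using this
  have hφ : HasDerivAt (fun t : ℝ => f (x0 - t • dd))
      ⟪gradient f (x0 - γ0 • dd), -dd⟫_ℝ γ0 := by
    have hg := (hdiff (x0 - γ0 • dd)).hasGradientAt
    have := hg.hasFDerivAt.comp_hasDerivAt γ0 (hline γ0)
    simpa [Function.comp_def] using this
  have hmin : IsLocalMin (fun t : ℝ => f (x0 - t • dd)) γ0 :=
    Filter.Eventually.of_forall fun t => hls t
  have := hmin.hasDerivAt_eq_zero hφ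
  rw [inner_neg_right] at this
  linarith [this]



set_option maxHeartbeats 1000000 in
/-- Quality of the Fletcher–Reeves search directions with exact line search:
after `k` iterations, `‖d_k‖² ≤ (1 + k²(1 − q)²/(4q))‖∇f(x_k)‖²`, where `q = μ/L`. -/
theorem fr_search_direction_growth
    (n : ℕ) (μ L : ℝ) (hμ : 0 < μ) (hμL : μ < L)
    (q : ℝ) (hq : q = μ / L)
    (f : EuclideanSpace ℝ (Fin n) → ℝ)
    (hdiff : Differentiable ℝ f)
    (hsmooth : ∀ a b, ‖gradient f a - gradient f b‖ ≤ L * ‖a - b‖)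
    (hsc : ∀ a b, f a ≥ f b + ⟪gradient f b, a - b⟫_ℝ + μ / 2 * ‖a - b‖ ^ 2)
    (x d : ℕ → EuclideanSpace ℝ (Fin n)) (γ β : ℕ → ℝ)
    (hd0 : d 0 = gradient f (x 0))
    (hls : ∀ i, ∀ t : ℝ, f (x i - γ i • d i) ≤ f (x i - t • d i))
    (hx : ∀ i, x (i + 1) = x i - γ i • d i)
    (hβ : ∀ i, β i = ‖gradient f (x (i + 1))‖ ^ 2 / ‖gradient f (x i)‖ ^ 2)
    (hd : ∀ i, d (i + 1) = gradient f (x (i + 1)) + β i • d i)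
    (k : ℕ) (hgrad : ∀ i ≤ k, gradient f (x i) ≠ 0) :
    ‖d k‖ ^ 2 ≤ (1 + (k : ℝ) ^ 2 * (1 - q) ^ 2 / (4 * q)) * ‖gradient f (x k)‖ ^ 2 := by
  have hL : (0:ℝ) < L := lt_trans hμ hμL
  set g : ℕ → EuclideanSpace ℝ (Fin n) := fun i => gradient f (x i) with hg
  set c : ℝ := (L - μ) ^ 2 / (4 * μ * L) with hc
  have hc0 : 0 ≤ c := by rw [hc]; positivity
  have hceq : (1 - q) ^ 2 / (4 * q) = c := by
    rw [hq, hc]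
    field_simp
  -- orthogonality
  have hortho : ∀ i, ⟪g (i + 1), d i⟫_ℝ = 0 := by
    intro i
    rw [hg]
    simp only
    rw [hx i]
    exact ortho_aux f hdiff (x i) (d i) (γ i) (hls i)
  -- inner product of gradient with direction
  have hgd : ∀ i, ⟪g i, d i⟫_ℝ = ‖g i‖ ^ 2 := by
    intro i
    induction i with
    | zero => rw [hd0]; exact real_inner_self_eq_norm_sq _
    | succ m _ =>
      rw [hd m, inner_add_right, real_inner_smul_right, hortho m,
        real_inner_self_eq_norm_sq]
      ring
  -- cocoercivity instantiated along steps
  have hco : ∀ i, ‖g (i + 1) - g i - μ • (-(γ i • d i))‖ ^ 2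
      ≤ (L - μ) * (⟪g (i + 1) - g i, -(γ i • d i)⟫_ℝ - μ * ‖-(γ i • d i)‖ ^ 2) := by
    intro i
    have hstep : x (i + 1) - x i = -(γ i • d i) := by rw [hx i]; abel
    have := coco_sym hμ hμL f hdiff hsmooth hsc (x (i + 1)) (x i)
    rwa [hstep] at this
  -- main induction
  suffices H : ∀ m : ℕ, (∀ i ≤ m, g i ≠ 0) → ‖d m‖ ^ 2 ≤ (1 + (m : ℝ) ^ 2 * c) * ‖g m‖ ^ 2 by
    have := H k hgrad
    rw [mul_div_assoc, hceq]
    exact this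
  intro m
  induction m with
  | zero =>
    intro _
    rw [hd0]
    simp
    exact le_rfl
  | succ m IH =>
    intro hgm
    have IH' := IH (fun i hi => hgm i (le_trans hi (Nat.le_succ m)))
    have hgm0 : g m ≠ 0 := hgm m (Nat.le_succ m)
    have hU0 : (0:ℝ) < ‖g m‖ ^ 2 := by
      have := norm_pos_iff.2 hgm0
      positivity
    -- one-step estimate
    have PS := onestep hμ hμL (g (m + 1)) (g m) (d m) (γ m) hgm0
      (hortho m) (hgd m) (hco m)
    -- bound the sqrt term using IH
    have hsq1 : ‖g m‖ ^ 2 * ‖d m‖ ^ 2 - (‖g m‖ ^ 2) ^ 2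
        ≤ (m : ℝ) ^ 2 * c * (‖g m‖ ^ 2) ^ 2 := by
      nlinarith [mul_le_mul_of_nonneg_left IH' hU0.le]
    have hsq2 : Real.sqrt (‖g m‖ ^ 2 * ‖d m‖ ^ 2 - (‖g m‖ ^ 2) ^ 2)
        ≤ (m : ℝ) * Real.sqrt c * ‖g m‖ ^ 2 := by
      calc Real.sqrt (‖g m‖ ^ 2 * ‖d m‖ ^ 2 - (‖g m‖ ^ 2) ^ 2)
          ≤ Real.sqrt ((m : ℝ) ^ 2 * c * (‖g m‖ ^ 2) ^ 2) := Real.sqrt_le_sqrt hsq1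
        _ = (m : ℝ) * Real.sqrt c * ‖g m‖ ^ 2 := by
            rw [show (m : ℝ) ^ 2 * c * (‖g m‖ ^ 2) ^ 2
              = ((m : ℝ) * ‖g m‖ ^ 2) ^ 2 * c by ring,
              Real.sqrt_mul (sq_nonneg _), Real.sqrt_sq (by positivity)]
            ring
    have PS2 : ‖g (m + 1)‖ * ‖d m‖ ≤ ((m : ℝ) + 1) * Real.sqrt c * ‖g m‖ ^ 2 := by
      have hcc : Real.sqrt ((L - μ) ^ 2 / (4 * μ * L)) = Real.sqrt c := by rw [hc]
      rw [hcc] at PS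
      calc ‖g (m + 1)‖ * ‖d m‖
          ≤ Real.sqrt (‖g m‖ ^ 2 * ‖d m‖ ^ 2 - (‖g m‖ ^ 2) ^ 2)
            + Real.sqrt c * ‖g m‖ ^ 2 := PS
        _ ≤ (m : ℝ) * Real.sqrt c * ‖g m‖ ^ 2 + Real.sqrt c * ‖g m‖ ^ 2 := by
              linarith [hsq2]
        _ = ((m : ℝ) + 1) * Real.sqrt c * ‖g m‖ ^ 2 := by ring
    -- square it
    have hQ : ‖g (m + 1)‖ ^ 2 * ‖d m‖ ^ 2
        ≤ ((m : ℝ) + 1) ^ 2 * c * (‖g m‖ ^ 2) ^ 2 := by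
      have h1 := mul_self_le_mul_self (by positivity) PS2
      have h2 : ((m : ℝ) + 1) * Real.sqrt c * ‖g m‖ ^ 2
          * (((m : ℝ) + 1) * Real.sqrt c * ‖g m‖ ^ 2)
          = ((m : ℝ) + 1) ^ 2 * (Real.sqrt c * Real.sqrt c) * (‖g m‖ ^ 2) ^ 2 := by
        ring
      rw [h2, Real.mul_self_sqrt hc0] at h1
      nlinarith [h1]
    -- expand d (m+1)
    have hdm1 : ‖d (m + 1)‖ ^ 2 = ‖g (m + 1)‖ ^ 2 + (β m) ^ 2 * ‖d m‖ ^ 2 := by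
      rw [hd m, norm_add_sq_real, real_inner_smul_right, hortho m, norm_smul,
        Real.norm_eq_abs, mul_pow, sq_abs]
      ring
    have hβ2 : (β m) ^ 2 * ‖d m‖ ^ 2 ≤ ((m : ℝ) + 1) ^ 2 * c * ‖g (m + 1)‖ ^ 2 := by
      rw [hβ m]
      rw [div_pow, div_mul_eq_mul_div, div_le_iff₀ (by positivity)]
      nlinarith [mul_le_mul_of_nonneg_left hQ (sq_nonneg ‖g (m + 1)‖)]
    rw [hdm1]
    have : (1 + ((m : ℕ) + 1 : ℝ) ^ 2 * c) * ‖g (m + 1)‖ ^ 2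
        = ‖g (m + 1)‖ ^ 2 + ((m : ℝ) + 1) ^ 2 * c * ‖g (m + 1)‖ ^ 2 := by
      push_cast
      ring
    push_cast
    linarith [hβ2]
end

section
/- Let 0 < q < 1 and let (c_k)_{k ≥ 0} be a sequence of reals with c_0 = 1, c_k ≥ 1 for all k, and satisfying for every k ≥ 0 the recursion √(c_{k+1} − 1) ≤ (1 − q + 2√((c_k − 1) q)) / (2√q). Then for all k ≥ 0, c_k ≤ 1 + k² (1 − q)² / (4q). -/
/-- Growth bound for the Fletcher–Reeves quality-ratio recursion: if `c_0 = 1`,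
`c_k ≥ 1` for all `k`, and `√(c_{k+1} − 1) ≤ (1 − q + 2√((c_k − 1)q))/(2√q)`,
then `c_k ≤ 1 + k²(1 − q)²/(4q)` for all `k`. -/
theorem fr_ratio_recursion_bound
    (q : ℝ) (hq0 : 0 < q) (hq1 : q < 1)
    (c : ℕ → ℝ) (hc0 : c 0 = 1) (hc1 : ∀ k, 1 ≤ c k)
    (hrec : ∀ k, Real.sqrt (c (k + 1) - 1) ≤
      (1 - q + 2 * Real.sqrt ((c k - 1) * q)) / (2 * Real.sqrt q)) :
    ∀ k, c k ≤ 1 + (k : ℝ) ^ 2 * (1 - q) ^ 2 / (4 * q) := by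
  have hsq : 0 < Real.sqrt q := Real.sqrt_pos.mpr hq0
  have hq1' : 0 ≤ 1 - q := by linarith
  have key : ∀ k, Real.sqrt (c k - 1) ≤ (k : ℝ) * (1 - q) / (2 * Real.sqrt q) := by
    intro k
    induction k with
    | zero => simp [hc0]
    | succ n ih =>
      have h1 : Real.sqrt ((c n - 1) * q) = Real.sqrt (c n - 1) * Real.sqrt q :=
        Real.sqrt_mul (by linarith [hc1 n]) q
      have h2 : Real.sqrt (c n - 1) * Real.sqrt q ≤ (n : ℝ) * (1 - q) / 2 := by
        have := mul_le_mul_of_nonneg_right ih (le_of_lt hsq)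
        calc Real.sqrt (c n - 1) * Real.sqrt q
            ≤ (n : ℝ) * (1 - q) / (2 * Real.sqrt q) * Real.sqrt q := this
          _ = (n : ℝ) * (1 - q) / 2 := by field_simp
      calc Real.sqrt (c (n + 1) - 1)
          ≤ (1 - q + 2 * Real.sqrt ((c n - 1) * q)) / (2 * Real.sqrt q) := hrec n
        _ ≤ (1 - q + 2 * ((n : ℝ) * (1 - q) / 2)) / (2 * Real.sqrt q) := by
            apply div_le_div_of_nonneg_right _ (by positivity)
            rw [h1]; linarith
        _ = ((n + 1 : ℕ) : ℝ) * (1 - q) / (2 * Real.sqrt q) := by push_cast; ring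
  intro k
  have h := key k
  have hnn : 0 ≤ c k - 1 := by linarith [hc1 k]
  have hsqr : c k - 1 ≤ ((k : ℝ) * (1 - q) / (2 * Real.sqrt q)) ^ 2 := by
    have := sq_le_sq' (by linarith [Real.sqrt_nonneg (c k - 1)]) h
    rwa [Real.sq_sqrt hnn] at this
  have hval : ((k : ℝ) * (1 - q) / (2 * Real.sqrt q)) ^ 2
      = (k : ℝ) ^ 2 * (1 - q) ^ 2 / (4 * q) := by
    rw [div_pow, mul_pow, mul_pow, Real.sq_sqrt hq0.le]; ring
  rw [hval] at hsqr
  linarith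
end

section
/- Let 0 < μ < L < ∞, q = μ/L, c > 1, and β ≥ 0. If β − 2√(1 − 1/c)·√β ≤ (L + μ)²/(4cLμ) − 1, then √β ≤ √(1 − 1/c) + √((L + μ)²/(4cLμ) − 1/c), and consequently β ≤ (1/c) · (1 − q + 2√((c − 1) q))² / (4q). -/
/-- Key algebraic step bounding the Fletcher–Reeves update parameter `β`:
if `β − 2√(1 − 1/c)√β ≤ (L + μ)²/(4cLμ) − 1`, then
`√β ≤ √(1 − 1/c) + √((L + μ)²/(4cLμ) − 1/c)` and consequently
`β ≤ (1/c)(1 − q + 2√((c − 1)q))²/(4q)`, where `q = μ/L`. -/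
theorem fr_beta_algebraic_bound
    (μ L c β : ℝ) (hμ : 0 < μ) (hμL : μ < L) (hc : 1 < c) (hβ : 0 ≤ β)
    (q : ℝ) (hq : q = μ / L)
    (h : β - 2 * Real.sqrt (1 - 1 / c) * Real.sqrt β ≤
      (L + μ) ^ 2 / (4 * c * L * μ) - 1) :
    Real.sqrt β ≤ Real.sqrt (1 - 1 / c) +
        Real.sqrt ((L + μ) ^ 2 / (4 * c * L * μ) - 1 / c) ∧
      β ≤ 1 / c * (1 - q + 2 * Real.sqrt ((c - 1) * q)) ^ 2 / (4 * q) := by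
  have hL : 0 < L := hμ.trans hμL
  have hc0 : 0 < c := by linarith
  set a := Real.sqrt (1 - 1 / c) with ha
  set s := Real.sqrt β with hs
  set b := Real.sqrt ((L + μ) ^ 2 / (4 * c * L * μ) - 1 / c) with hb
  have ha0 : 0 ≤ a := Real.sqrt_nonneg _
  have hs0 : 0 ≤ s := Real.sqrt_nonneg _
  have hb0 : 0 ≤ b := Real.sqrt_nonneg _
  have h1c : (0:ℝ) ≤ 1 - 1 / c := by
    have : 1 / c < 1 := by rw [div_lt_one hc0]; exact hc
    linarith
  have ha2 : a ^ 2 = 1 - 1 / c := Real.sq_sqrt h1c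
  have hs2 : s ^ 2 = β := Real.sq_sqrt hβ
  have hKey : (L + μ) ^ 2 / (4 * c * L * μ) - 1 / c = (L - μ) ^ 2 / (4 * c * L * μ) := by
    field_simp
    ring
  have hKnn : (0:ℝ) ≤ (L + μ) ^ 2 / (4 * c * L * μ) - 1 / c := by
    rw [hKey]; positivity
  have hb2 : b ^ 2 = (L + μ) ^ 2 / (4 * c * L * μ) - 1 / c := Real.sq_sqrt hKnn
  -- first part
  have hsq : (s - a) ^ 2 ≤ b ^ 2 := by
    have : (s - a) ^ 2 = β - 2 * a * s + (1 - 1 / c) := by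
      rw [← hs2, ← ha2]; ring
    rw [this, hb2]; linarith
  have h1 : s ≤ a + b := by nlinarith [sq_nonneg (s - a + b), sq_nonneg (s - a - b)]
  refine ⟨h1, ?_⟩
  -- second part
  have hx := Real.sqrt_pos.mpr hμ
  have hy := Real.sqrt_pos.mpr hL
  have hu := Real.sqrt_pos.mpr hc0
  have ht0 : (0:ℝ) ≤ c - 1 := by linarith
  set x := Real.sqrt μ with hxd
  set y := Real.sqrt L with hyd
  set u := Real.sqrt c with hud
  set t := Real.sqrt (c - 1) with htd
  have hx2 : x ^ 2 = μ := Real.sq_sqrt hμ.le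
  have hy2 : y ^ 2 = L := Real.sq_sqrt hL.le
  have hu2 : u ^ 2 = c := Real.sq_sqrt hc0.le
  have ht2 : t ^ 2 = c - 1 := Real.sq_sqrt ht0
  have ht0' : 0 ≤ t := Real.sqrt_nonneg _
  -- a = t / u
  have haeq : a = t / u := by
    rw [ha, show 1 - 1 / c = (c - 1) / c by field_simp, Real.sqrt_div ht0]
  -- b = (L - μ) / (2 * u * y * x)
  have hbeq : b = (L - μ) / (2 * u * y * x) := by
    rw [hb, hKey]
    rw [Real.sqrt_div (by positivity)]
    congr 1
    · exact Real.sqrt_sq (by linarith)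
    · rw [show 4 * c * L * μ = (2 * u * y * x) ^ 2 by rw [mul_pow, mul_pow, mul_pow, hx2, hy2, hu2]; ring]
      exact Real.sqrt_sq (by positivity)
  -- sqrt ((c-1)*q) = t * x / y
  have hq' : q = x ^ 2 / y ^ 2 := by rw [hq, hx2, hy2]
  have hcq : Real.sqrt ((c - 1) * q) = t * x / y := by
    rw [hq', show (c - 1) * (x ^ 2 / y ^ 2) = (t * x / y) ^ 2 by rw [div_pow, mul_pow, ht2]; ring]
    exact Real.sqrt_sq (by positivity)
  have h2 : β ≤ (a + b) ^ 2 := by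
    rw [← hs2]; exact pow_le_pow_left₀ hs0 h1 2
  have heq : (a + b) ^ 2 = 1 / c * (1 - q + 2 * Real.sqrt ((c - 1) * q)) ^ 2 / (4 * q) := by
    rw [haeq, hbeq, hcq, hq', ← hu2, ← hx2, ← hy2]
    field_simp
    ring
  linarith [heq ▸ h2]
end
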